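/- arXiv:0708.3477 — 4 statements merged into one kernel-verified Lean document; each statement's English description precedes it below -/
import Mathlib

section
/- A set P ⊆ ℕ is ultimately periodic if and only if there exists a finite-state causal operator H : (ℕ → Bool) → (ℕ → Bool) such that H(χ_P)(t) = χ_P(t+1) for all t ∈ ℕ. -/
open Classical in
/-- The characteristic ω-sequence of a set of natural numbers. -/
noncomputable def chi (P : Set ℕ) : ℕ → Bool := fun n => decide (n ∈ P)

/-- A causal operator is *finite state* if it is computed by a Moore automaton
`(Q, δ, q₀, out)` with finite state set `Q`: the `n`-th output letter is
`out(δ*(q₀, [x 0, …, x (n−1)]), x n)`. -/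
def FiniteStateCausal {α β : Type} (F : (ℕ → α) → (ℕ → β)) : Prop :=
  ∃ (Q : Type) (_ : Fintype Q) (δ : Q → α → Q) (q₀ : Q) (out : Q → α → β),
    ∀ (x : ℕ → α) (n : ℕ),
      F x n = out (((List.range n).map x).foldl δ q₀) (x n)

/-- A set `P ⊆ ℕ` is *ultimately periodic* if for some period `p > 0` and
threshold `d`, `n ∈ P ↔ n + p ∈ P` for all `n > d`. -/
def UltimatelyPeriodic (P : Set ℕ) : Prop :=
  ∃ p > 0, ∃ d : ℕ, ∀ n > d, (n ∈ P ↔ n + p ∈ P)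

private lemma mod_succ_eq (a p : ℕ) (hp : 0 < p) :
    (a + 1) % p = if a % p + 1 = p then 0 else a % p + 1 := by
  rcases Nat.lt_or_ge p 2 with h | h
  · have hp1 : p = 1 := by omega
    subst hp1
    simp [Nat.mod_one]
  · rw [Nat.add_mod a 1 p, Nat.mod_eq_of_lt (show 1 < p by omega)]
    have hlt : a % p < p := Nat.mod_lt _ hp
    split
    · next he => rw [he, Nat.mod_self]
    · exact Nat.mod_eq_of_lt (by omega)

private lemma foldl_range_succ {α Q : Type} (δ : Q → α → Q) (q₀ : Q) (x : ℕ → α) (n : ℕ) :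
    ((List.range (n+1)).map x).foldl δ q₀
      = δ (((List.range n).map x).foldl δ q₀) (x n) := by
  rw [List.range_succ, List.map_append, List.foldl_append]
  simp

/-- `P ⊆ ℕ` is ultimately periodic iff some finite-state causal operator `H`
predicts `P`: `H(χ_P)(t) = χ_P(t+1)` for all `t`. -/
theorem ultimatelyPeriodic_iff_finiteState_predictor (P : Set ℕ) :
    UltimatelyPeriodic P ↔
      ∃ H : (ℕ → Bool) → (ℕ → Bool), FiniteStateCausal H ∧
        ∀ t : ℕ, H (chi P) t = chi P (t + 1) := by
  constructor
  · rintro ⟨p, hp, d, hper⟩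
    set N := d + 1 with hN
    have hNp : 0 < N + p := by omega
    -- chi is periodic above d
    have chiper : ∀ a, d < a → ∀ j, chi P (a + j * p) = chi P a := by
      intro a ha j
      induction j with
      | zero => simp
      | succ j ih =>
        have h1 : a + (j+1) * p = (a + j * p) + p := by ring
        have h2 : d < a + j * p := by omega
        have := hper (a + j * p) h2
        rw [h1]
        have : chi P (a + j * p + p) = chi P (a + j * p) := by
          simp only [chi]
          exact decide_eq_decide.mpr this.symm
        rw [this, ih]
    -- the automaton
    let δ : Fin (N + p) → Bool → Fin (N + p) := fun q _ =>
      if h : q.val + 1 < N + p then ⟨q.val + 1, h⟩ else ⟨N, by omega⟩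
    let q₀ : Fin (N + p) := ⟨0, hNp⟩
    let out : Fin (N + p) → Bool → Bool := fun q _ => chi P (q.val + 1)
    let H : (ℕ → Bool) → (ℕ → Bool) := fun x n =>
      out (((List.range n).map x).foldl δ q₀) (x n)
    refine ⟨H, ⟨Fin (N + p), inferInstance, δ, q₀, out, fun _ _ => rfl⟩, ?_⟩
    -- the reached state
    have fbound : ∀ n : ℕ, (if n < N then n else N + (n - N) % p) < N + p := by
      intro n
      split
      · omega
      · have := Nat.mod_lt (n - N) hp; omega
    have hst : ∀ (x : ℕ → Bool) (n : ℕ),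
        ((List.range n).map x).foldl δ q₀ = ⟨if n < N then n else N + (n - N) % p, fbound n⟩ := by
      intro x n
      induction n with
      | zero => simp [q₀]
      | succ n ih =>
        rw [foldl_range_succ, ih]
        simp only [δ]
        rcases lt_or_ge (n+1) N with h | h
        · have h1 : n < N := by omega
          rw [dif_pos (by simp [h1]; omega)]
          simp [h1, h]
        · rcases lt_or_ge n N with h2 | h2
          · -- n + 1 = N
            have h3 : n + 1 = N := by omega
            have : (if n < N then n else N + (n - N) % p) = n := by simp [h2]
            rw [dif_pos (by rw [this]; omega)]
            simp [h2, h3]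
          · have hv : (if n < N then n else N + (n - N) % p) = N + (n - N) % p := by
              simp [Nat.not_lt.mpr h2]
            rcases lt_or_ge ((n - N) % p + 1) p with h4 | h4
            · rw [dif_pos (by rw [hv]; omega)]
              have h5 : (n + 1 - N) % p = (n - N) % p + 1 := by
                have he : n + 1 - N = (n - N) + 1 := by omega
                rw [he, mod_succ_eq _ _ hp, if_neg (by omega)]
              simp only [Fin.mk.injEq]
              rw [hv]
              simp [Nat.not_lt.mpr h, h5]
              omega
            · have h6 : (n - N) % p = p - 1 := by
                have := Nat.mod_lt (n - N) hp; omega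
              rw [dif_neg (by rw [hv, h6]; omega)]
              have h7 : (n + 1 - N) % p = 0 := by
                have h8 : n + 1 - N = (n - N) + 1 := by omega
                rw [h8, mod_succ_eq _ _ hp, if_pos (by omega)]
              simp [Nat.not_lt.mpr h, h7]
    intro t
    show out (((List.range t).map (chi P)).foldl δ q₀) (chi P t) = chi P (t + 1)
    rw [hst]
    simp only [out]
    rcases lt_or_ge t N with h | h
    · simp [h]
    · have h1 : ¬ t < N := by omega
      simp only [h1, if_neg]
      have hb : d < N + (t - N) % p + 1 := by omega
      have hj : t + 1 = (N + (t - N) % p + 1) + ((t - N) / p) * p := by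
        have h9 := Nat.div_add_mod (t - N) p
        have h10 : ((t - N) / p) * p = p * ((t - N) / p) := Nat.mul_comm _ _
        omega
      rw [hj, chiper _ hb]
      simp [h1]
  · rintro ⟨H, ⟨Q, fQ, δ, q₀, out, hspec⟩, hpred⟩
    haveI := fQ
    set x := chi P with hx
    set st : ℕ → Q := fun n => ((List.range n).map x).foldl δ q₀ with hstdef
    have hout : ∀ n, out (st n) (x n) = x (n + 1) := by
      intro n
      rw [← hspec x n, hpred n]
    obtain ⟨m, n, hmn, heq⟩ :=
      Finite.exists_ne_map_eq_of_infinite (fun t => (st t, x t))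
    -- wlog m < n
    wlog hlt : m < n generalizing m n
    · exact this n m (Ne.symm hmn) heq.symm (by omega)
    have key : ∀ k, st (m + k) = st (n + k) ∧ x (m + k) = x (n + k) := by
      intro k
      induction k with
      | zero =>
        simpa using (Prod.mk.injEq _ _ _ _ ▸ heq : _)
      | succ k ih =>
        constructor
        · show st (m + k + 1) = st (n + k + 1)
          simp only [hstdef]
          rw [foldl_range_succ, foldl_range_succ]
          rw [show ((List.range (m+k)).map x).foldl δ q₀ = st (m+k) from rfl,
              show ((List.range (n+k)).map x).foldl δ q₀ = st (n+k) from rfl,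
              ih.1, ih.2]
        · show x (m + k + 1) = x (n + k + 1)
          rw [← hout (m + k), ← hout (n + k), ih.1, ih.2]
    refine ⟨n - m, by omega, m, fun t ht => ?_⟩
    have h1 : x t = x (t + (n - m)) := by
      have h2 := (key (t - m)).2
      have h3 : m + (t - m) = t := by omega
      have h4 : n + (t - m) = t + (n - m) := by omega
      rw [h3, h4] at h2
      exact h2
    exact decide_eq_decide.mp h1
end

section
/- In every parity game, one of the two players has a memoryless winning strategy. Precisely: let G = (V₁, V₂, E) be a game arena (a directed bipartite graph, possibly infinite, in which every vertex has at least one outgoing edge), let v_init ∈ V₁ be an initial vertex, and let c : V₁ ∪ V₂ → {0, 1, …, m} be a coloring. Then either Player I has a memoryless winning strategy from v_init, or Player II has a memoryless winning strategy from v_init. -/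
namespace ParityDet



/-- infinite iff unbounded, for subsets of ℕ -/
lemma inf_iff_unbdd {P : ℕ → Prop} : {n | P n}.Infinite ↔ ∀ N, ∃ n, N ≤ n ∧ P n := by
  constructor
  · intro h N
    obtain ⟨b, hb, hNb⟩ := h.exists_gt N
    exact ⟨b, le_of_lt hNb, hb⟩
  · intro h
    apply Set.infinite_of_forall_exists_gt
    intro a
    obtain ⟨n, hn, hP⟩ := h (a+1)
    exact ⟨n, hP, lt_of_lt_of_le (Nat.lt_succ_self a) hn⟩

/-- tail invariance -/
lemma inf_tail_iff {P : ℕ → Prop} (N : ℕ) :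
    {n | P (n + N)}.Infinite ↔ {n | P n}.Infinite := by
  simp only [inf_iff_unbdd]
  constructor
  · intro h M
    obtain ⟨n, hn, hP⟩ := h M
    exact ⟨n + N, le_trans hn (Nat.le_add_right _ _), hP⟩
  · intro h M
    obtain ⟨n, hn, hP⟩ := h (M + N)
    exact ⟨n - N, by omega, by rwa [Nat.sub_add_cancel (by omega)]⟩

/-- pigeonhole: a sequence bounded by m has some value occurring infinitely often -/
lemma exists_inf_val {f : ℕ → ℕ} {m : ℕ} (hf : ∀ n, f n ≤ m) :
    ∃ k, {n | f n = k}.Infinite := by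
  by_contra h
  push_neg at h
  have : (Set.univ : Set ℕ) ⊆ ⋃ k ∈ Finset.range (m+1), {n | f n = k} := by
    intro n _
    simp only [Set.mem_iUnion]
    exact ⟨f n, by simpa using Nat.lt_succ_of_le (hf n), rfl⟩
  have : (Set.univ : Set ℕ).Finite :=
    Set.Finite.subset (Set.Finite.biUnion (Finset.range (m+1)).finite_toSet (fun k _ => h k)) this
  exact Set.infinite_univ this

/-- even-odd split -/
lemma inf_even_odd_iff {P : ℕ → Prop} :
    {n | P n}.Infinite ↔ ({j | P (2*j)}.Infinite ∨ {j | P (2*j+1)}.Infinite) := by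
  simp only [inf_iff_unbdd]
  constructor
  · intro h
    by_contra hc
    push_neg at hc
    obtain ⟨⟨N1, hN1⟩, ⟨N2, hN2⟩⟩ := hc
    obtain ⟨n, hn, hP⟩ := h (2 * N1 + 2 * N2 + 2)
    rcases Nat.even_or_odd n with ⟨j, hj⟩ | ⟨j, hj⟩
    · exact hN1 j (by omega) (by rwa [show 2*j = n by omega])
    · exact hN2 j (by omega) (by rwa [show 2*j+1 = n by omega])
  · rintro (h | h) N
    · obtain ⟨j, hj, hP⟩ := h N
      exact ⟨2*j, by omega, hP⟩
    · obtain ⟨j, hj, hP⟩ := h N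
      exact ⟨2*j+1, by omega, hP⟩


section Game
universe u
variable {V : Type u} (owner : V → Bool) (E : V → V → Prop) (c : V → ℕ)


def IsPlay (ρ : ℕ → V) : Prop := ∀ n, E (ρ n) (ρ (n+1))

def Consistent (b : Bool) (s : V → V) (ρ : ℕ → V) : Prop :=
  ∀ n, owner (ρ n) = b → ρ (n+1) = s (ρ n)

def InfSet (ρ : ℕ → V) : Set ℕ := {k | {n | c (ρ n) = k}.Infinite}

def Wins (b : Bool) (ρ : ℕ → V) : Prop := Odd (sInf (InfSet c ρ)) ↔ b = true

def Strat (s : V → V) : Prop := ∀ v, E v (s v)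

def WinsFrom (b : Bool) (s : V → V) (v : V) : Prop :=
  ∀ ρ, IsPlay E ρ → Consistent owner b s ρ → ρ 0 = v → Wins c b ρ

def WinReg (b : Bool) : Set V := {v | ∃ s, Strat E s ∧ WinsFrom owner E c b s v}

/-- finite consistent paths -/
def Reach (b : Bool) (s : V → V) (x y : V) : Prop :=
  ∃ (k : ℕ) (f : ℕ → V), f 0 = x ∧ f k = y ∧
    ∀ i < k, E (f i) (f (i+1)) ∧ (owner (f i) = b → f (i+1) = s (f i))

variable {owner E c}

lemma infSet_tail (ρ : ℕ → V) (N : ℕ) : InfSet c (fun n => ρ (n + N)) = InfSet c ρ := by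
  ext k
  exact inf_tail_iff (P := fun n => c (ρ n) = k) N

lemma wins_tail {b : Bool} {ρ : ℕ → V} (N : ℕ) :
    Wins c b (fun n => ρ (n + N)) ↔ Wins c b ρ := by
  unfold Wins
  rw [infSet_tail]

lemma isPlay_tail {ρ : ℕ → V} (h : IsPlay E ρ) (N : ℕ) : IsPlay E (fun n => ρ (n + N)) :=
  fun n => by simpa [Nat.add_right_comm] using h (n + N)

lemma consistent_tail {b : Bool} {s : V → V} {ρ : ℕ → V} (h : Consistent owner b s ρ) (N : ℕ) :
    Consistent owner b s (fun n => ρ (n + N)) :=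
  fun n hb => by simpa [Nat.add_right_comm] using h (n + N) hb

/-- one-step closure of winning positions -/
lemma winsFrom_step {b : Bool} {s : V → V} {v u : V} (hw : WinsFrom owner E c b s v)
    (he : E v u) (hcons : owner v = b → u = s v) : WinsFrom owner E c b s u := by
  intro ρ hp hc h0
  set ρ' : ℕ → V := fun n => Nat.rec v (fun k _ => ρ k) n with hρ'
  have hp' : IsPlay E ρ' := by
    intro n
    cases n with
    | zero => simpa [hρ', h0] using he
    | succ k => exact hp k
  have hc' : Consistent owner b s ρ' := by
    intro n hb
    cases n with
    | zero => simpa [hρ', h0] using hcons hb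
    | succ k => exact hc k hb
  have := hw ρ' hp' hc' rfl
  exact (wins_tail (c := c) (b := b) (ρ := ρ') 1).mpr this

lemma reach_refl {b : Bool} {s : V → V} (x : V) : Reach owner E b s x x :=
  ⟨0, fun _ => x, rfl, rfl, fun i h => absurd h (Nat.not_lt_zero i)⟩

lemma reach_step {b : Bool} {s : V → V} {x y z : V} (h : Reach owner E b s x y)
    (he : E y z) (hc : owner y = b → z = s y) : Reach owner E b s x z := by
  obtain ⟨k, f, h0, hk, hstep⟩ := h
  refine ⟨k+1, fun i => if i ≤ k then f i else z, by simp [h0], by simp, ?_⟩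
  intro i hi
  rcases Nat.lt_or_ge i k with h1 | h1
  · have : i + 1 ≤ k := h1
    simpa [Nat.le_of_lt h1, this] using hstep i h1
  · have hik : i = k := by omega
    subst hik
    exact ⟨by simp [hk, he], by simpa [hk] using hc⟩

lemma winsFrom_reach {b : Bool} {s : V → V} {x y : V} (hw : WinsFrom owner E c b s x)
    (h : Reach owner E b s x y) : WinsFrom owner E c b s y := by
  obtain ⟨k, f, h0, hk, hstep⟩ := h
  have key : ∀ i, i ≤ k → WinsFrom owner E c b s (f i) := by
    intro i
    induction i with
    | zero => intro _; rwa [h0]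
    | succ n ih =>
      intro hik
      exact winsFrom_step (ih (by omega)) (hstep n (by omega)).1 (hstep n (by omega)).2
  rw [← hk]
  exact key k le_rfl

/-- Uniformization: a single positional strategy winning from the whole winning region. -/
lemma uniformization (hE : ∀ v, ∃ w, E v w) (b : Bool) :
    ∃ s, Strat E s ∧ ∀ v ∈ WinReg owner E c b, WinsFrom owner E c b s v := by
  classical
  letI r : (V → V) → (V → V) → Prop := WellOrderingRel
  haveI : IsWellOrder (V → V) r := WellOrderingRel.isWellOrder
  set O : V → Set Ordinal := fun x =>
    {o | ∃ s, Ordinal.typein r s = o ∧ Strat E s ∧ WinsFrom owner E c b s x} with hO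
  have hmem : ∀ x, (O x).Nonempty →
      ∃ s, Ordinal.typein r s = sInf (O x) ∧ Strat E s ∧ WinsFrom owner E c b s x :=
    fun x hx => csInf_mem hx
  set wit : ∀ x, (O x).Nonempty → (V → V) := fun x hx => (hmem x hx).choose with hwit
  set sd : V → V := fun x =>
    if hx : (O x).Nonempty then wit x hx x else (hE x).choose with hsd
  have hsd_pos : ∀ x (hx : (O x).Nonempty), sd x = wit x hx x := by
    intro x hx
    simp only [hsd, dif_pos hx]
  have hwit_spec : ∀ x (hx : (O x).Nonempty),
      Ordinal.typein r (wit x hx) = sInf (O x) ∧ Strat E (wit x hx) ∧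
        WinsFrom owner E c b (wit x hx) x := fun x hx => (hmem x hx).choose_spec
  have hstrat : Strat E sd := by
    intro x
    by_cases hx : (O x).Nonempty
    · rw [hsd_pos x hx]
      exact (hwit_spec x hx).2.1 x
    · simp only [hsd, dif_neg hx]
      exact (hE x).choose_spec
  refine ⟨sd, hstrat, ?_⟩
  intro v hv
  -- key step
  have step : ∀ x (hx : (O x).Nonempty) u, E x u → (owner x = b → u = sd x) →
      (O u).Nonempty ∧ sInf (O u) ≤ sInf (O x) := by
    intro x hx u he hcons
    obtain ⟨hts, hst, hwin⟩ := hwit_spec x hx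
    have hwu : WinsFrom owner E c b (wit x hx) u :=
      winsFrom_step hwin he (fun hb => by rw [hcons hb, hsd_pos x hx])
    have humem : Ordinal.typein r (wit x hx) ∈ O u := ⟨wit x hx, rfl, hst, hwu⟩
    exact ⟨⟨_, humem⟩, le_trans (csInf_le (OrderBot.bddBelow _) humem) (le_of_eq hts)⟩
  -- the play
  intro ρ hp hc h0
  have hv0 : (O (ρ 0)).Nonempty := by
    obtain ⟨s0, hs0, hw0⟩ := hv
    exact ⟨_, s0, rfl, hs0, by rwa [h0]⟩
  have good : ∀ n, (O (ρ n)).Nonempty := by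
    intro n
    induction n with
    | zero => exact hv0
    | succ k ih => exact (step (ρ k) ih (ρ (k+1)) (hp k) (hc k)).1
  set g : ℕ → Ordinal := fun n => sInf (O (ρ n)) with hg
  have gstep : ∀ n, g (n+1) ≤ g n :=
    fun n => (step (ρ n) (good n) (ρ (n+1)) (hp n) (hc n)).2
  have ganti : ∀ m n, m ≤ n → g n ≤ g m := by
    intro m n hmn
    induction n with
    | zero => rw [Nat.le_zero.mp hmn]
    | succ k ih =>
      rcases Nat.lt_or_ge m (k+1) with h1 | h1
      · exact le_trans (gstep k) (ih (by omega))
      · rw [Nat.le_antisymm hmn h1]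
  obtain ⟨n₀, hn₀⟩ : ∃ n₀, g n₀ = sInf (Set.range g) := by
    have : sInf (Set.range g) ∈ Set.range g := csInf_mem ⟨g 0, 0, rfl⟩
    obtain ⟨n₀, h⟩ := this
    exact ⟨n₀, h⟩
  have gconst : ∀ n, n₀ ≤ n → g n = g n₀ := by
    intro n hn
    refine le_antisymm (ganti n₀ n hn) ?_
    rw [hn₀]
    exact csInf_le (OrderBot.bddBelow _) ⟨n, rfl⟩
  -- all witnesses from n₀ on coincide
  have witconst : ∀ n (hn : n₀ ≤ n), wit (ρ n) (good n) = wit (ρ n₀) (good n₀) := by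
    intro n hn
    apply Ordinal.typein_injective r
    rw [(hwit_spec _ (good n)).1, (hwit_spec _ (good n₀)).1]
    exact gconst n hn
  set sstar := wit (ρ n₀) (good n₀) with hsstar
  have hwinstar : WinsFrom owner E c b sstar (ρ n₀) := (hwit_spec _ (good n₀)).2.2
  have htail : Wins c b (fun n => ρ (n + n₀)) := by
    apply hwinstar (fun n => ρ (n + n₀)) (isPlay_tail hp n₀) _ (by simp)
    intro n hb
    have h1 := hc (n + n₀) hb
    rw [hsd_pos _ (good (n + n₀)), witconst (n + n₀) (by omega)] at h1
    show ρ (n + 1 + n₀) = sstar (ρ (n + n₀))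
    rw [show n + 1 + n₀ = n + n₀ + 1 by omega]
    exact h1
  exact (wins_tail n₀).mp htail


section Attractor
variable (owner E)

def attrF (b : Bool) (T X : Set V) : Set V :=
  T ∪ {v | owner v = b ∧ ∃ w, E v w ∧ w ∈ X} ∪ {v | owner v ≠ b ∧ ∀ w, E v w → w ∈ X}

noncomputable def attrStage (b : Bool) (T : Set V) (α : Ordinal.{u}) : Set V :=
  attrF owner E b T (⋃ β : {β : Ordinal.{u} // β < α}, attrStage b T β.1)
termination_by α
decreasing_by exact β.2

def Attr (b : Bool) (T : Set V) : Set V := {v | ∃ α, v ∈ attrStage owner E b T α}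

noncomputable def rankA (b : Bool) (T : Set V) (v : V) : Ordinal.{u} :=
  sInf {α | v ∈ attrStage owner E b T α}


variable {owner E}

lemma subset_attr (b : Bool) (T : Set V) : T ⊆ Attr owner E b T := by
  intro v hv
  exact ⟨0, by rw [attrStage]; exact Or.inl (Or.inl hv)⟩

lemma mem_stage_rank {b : Bool} {T : Set V} {v : V} (h : v ∈ Attr owner E b T) :
    v ∈ attrStage owner E b T (rankA owner E b T v) :=
  csInf_mem h

lemma rank_le {b : Bool} {T : Set V} {v : V} {α : Ordinal.{u}}
    (h : v ∈ attrStage owner E b T α) : rankA owner E b T v ≤ α :=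
  csInf_le (OrderBot.bddBelow _) h

lemma stage_mem_attr {b : Bool} {T : Set V} {v : V} {α : Ordinal.{u}}
    (h : v ∈ attrStage owner E b T α) : v ∈ Attr owner E b T := ⟨α, h⟩

lemma attr_cases {b : Bool} {T : Set V} {v : V} (h : v ∈ Attr owner E b T) (hT : v ∉ T) :
    (owner v = b → ∃ w, E v w ∧ w ∈ Attr owner E b T ∧
      rankA owner E b T w < rankA owner E b T v) ∧
    (owner v ≠ b → ∀ w, E v w → w ∈ Attr owner E b T ∧
      rankA owner E b T w < rankA owner E b T v) := by
  have hm := mem_stage_rank h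
  rw [attrStage] at hm
  rcases hm with (hm | hm) | hm
  · exact absurd hm hT
  · obtain ⟨hb, w, he, hw⟩ := hm
    simp only [Set.mem_iUnion] at hw
    obtain ⟨⟨β, hβ⟩, hwβ⟩ := hw
    constructor
    · exact fun _ => ⟨w, he, stage_mem_attr hwβ, lt_of_le_of_lt (rank_le hwβ) hβ⟩
    · intro hnb; exact absurd hb hnb
  · obtain ⟨hnb, hall⟩ := hm
    constructor
    · intro hb; exact absurd hb hnb
    · intro _ w he
      have hw := hall w he
      simp only [Set.mem_iUnion] at hw
      obtain ⟨⟨β, hβ⟩, hwβ⟩ := hw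
      exact ⟨stage_mem_attr hwβ, lt_of_le_of_lt (rank_le hwβ) hβ⟩

lemma compl_attr_trap {b : Bool} {T : Set V} {v : V} (h : v ∉ Attr owner E b T) :
    v ∉ T ∧
    (owner v = b → ∀ w, E v w → w ∉ Attr owner E b T) ∧
    (owner v ≠ b → (∃ w, E v w ∧ w ∉ Attr owner E b T) ∨ ¬∃ w, E v w) := by
  refine ⟨fun hT => h (subset_attr b T hT), ?_, ?_⟩
  · intro hb w he hw
    obtain ⟨α, hα⟩ := hw
    apply h
    refine ⟨α + 1, ?_⟩
    rw [attrStage]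
    refine Or.inl (Or.inr ⟨hb, w, he, ?_⟩)
    simp only [Set.mem_iUnion]
    exact ⟨⟨α, Order.lt_succ α⟩, hα⟩
  · intro hnb
    by_cases hex : ∃ w, E v w
    · left
      by_contra hcon
      push_neg at hcon
      have hall : ∀ w, E v w → w ∈ Attr owner E b T := hcon
      -- bound the ranks
      set α := ⨆ w : {w // E v w}, rankA owner E b T w.1 with hα
      apply h
      refine ⟨α + 1, ?_⟩
      rw [attrStage]
      refine Or.inr ⟨hnb, fun w he => ?_⟩
      simp only [Set.mem_iUnion]
      have hwA := hall w he
      have hrk : rankA owner E b T w ≤ α := Ordinal.le_iSup _ (⟨w, he⟩ : {w // E v w})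
      exact ⟨⟨rankA owner E b T w, lt_of_le_of_lt hrk (Order.lt_succ α)⟩, mem_stage_rank hwA⟩
    · exact Or.inr hex

/-- playing rank-decreasingly in the attractor reaches the target -/
lemma attr_reach {b : Bool} {T : Set V} {s : V → V}
    (hs : ∀ v, v ∈ Attr owner E b T → v ∉ T → owner v = b →
      s v ∈ Attr owner E b T ∧ rankA owner E b T (s v) < rankA owner E b T v) :
    ∀ ρ, IsPlay E ρ → Consistent owner b s ρ → ρ 0 ∈ Attr owner E b T → ∃ n, ρ n ∈ T := by
  have main : ∀ (α : Ordinal.{u}) ρ, IsPlay E ρ → Consistent owner b s ρ →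
      ρ 0 ∈ Attr owner E b T → rankA owner E b T (ρ 0) ≤ α → ∃ n, ρ n ∈ T := by
    intro α
    induction α using Ordinal.induction with
    | h α ih =>
      intro ρ hp hc h0 hr
      by_cases hT : ρ 0 ∈ T
      · exact ⟨0, hT⟩
      have hnext : ρ 1 ∈ Attr owner E b T ∧
          rankA owner E b T (ρ 1) < rankA owner E b T (ρ 0) := by
        by_cases hb : owner (ρ 0) = b
        · rw [hc 0 hb]
          exact hs (ρ 0) h0 hT hb
        · exact (attr_cases h0 hT).2 hb (ρ 1) (hp 0)
      have hlt : rankA owner E b T (ρ 1) < α := lt_of_lt_of_le hnext.2 hr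
      obtain ⟨n, hn⟩ := ih _ hlt (fun n => ρ (n+1))
        (fun n => hp (n+1)) (fun n hb => hc (n+1) hb) hnext.1 le_rfl
      exact ⟨n+1, hn⟩
  intro ρ hp hc h0
  exact main _ ρ hp hc h0 le_rfl


end Attractor

lemma wins_false_of_zero {ρ : ℕ → V} (h : (0:ℕ) ∈ InfSet c ρ) : Wins c false ρ := by
  have h0 : sInf (InfSet c ρ) = 0 := Nat.sInf_eq_zero.mpr (Or.inl h)
  unfold Wins
  rw [h0]
  simp [Nat.odd_iff]

lemma wins_shift {ρ : ℕ → V} {m : ℕ} (h1 : ∀ n, 1 ≤ c (ρ n)) (hbd : ∀ n, c (ρ n) ≤ m)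
    (b : Bool) : Wins (fun v => c v - 1) b ρ ↔ Wins c (!b) ρ := by
  have hne : (InfSet c ρ).Nonempty := exists_inf_val hbd
  set a := sInf (InfSet c ρ) with ha
  have hmem : a ∈ InfSet c ρ := Nat.sInf_mem hne
  have ha1 : 1 ≤ a := by
    obtain ⟨n, hn⟩ := hmem.nonempty
    have := h1 n
    simp only [Set.mem_setOf_eq] at hn
    omega
  have hset : InfSet (fun v => c v - 1) ρ = {k | k + 1 ∈ InfSet c ρ} := by
    ext k
    have hs2 : {n | c (ρ n) - 1 = k} = {n | c (ρ n) = k + 1} := by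
      ext n
      have := h1 n
      constructor <;> intro h <;> simp only [Set.mem_setOf_eq] at * <;> omega
    simp only [InfSet, Set.mem_setOf_eq, hs2]
  have hsinf : sInf (InfSet (fun v => c v - 1) ρ) = a - 1 := by
    rw [hset]
    apply le_antisymm
    · apply Nat.sInf_le
      simp only [Set.mem_setOf_eq]
      rwa [Nat.sub_add_cancel ha1]
    · apply le_csInf ⟨a - 1, by simp only [Set.mem_setOf_eq]; rwa [Nat.sub_add_cancel ha1]⟩
      intro k hk
      simp only [Set.mem_setOf_eq] at hk
      have : a ≤ k + 1 := Nat.sInf_le hk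
      omega
  have hodd : Odd (a - 1) ↔ ¬ Odd a := by
    obtain ⟨k, hk⟩ := Nat.exists_eq_add_of_le ha1
    rw [hk, Nat.add_comm]
    simp [Nat.odd_add_one]
  unfold Wins
  rw [hsinf, ← ha]
  cases b <;> simp [hodd]

lemma trap_transfer {S : Set V} {b : Bool} (hE : ∀ v, ∃ w, E v w)
    (htrap : ∀ v ∈ S, owner v ≠ b → ∀ w, E v w → w ∈ S)
    (s' : ↥S → ↥S)
    (hs' : ∀ x : ↥S, E x.1 (s' x).1)
    (hw : ∀ x : ↥S, WinsFrom (fun y : ↥S => owner y.1) (fun x y : ↥S => E x.1 y.1)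
      (fun y : ↥S => c y.1) b s' x) :
    ∃ s, Strat E s ∧ ∀ v ∈ S, WinsFrom owner E c b s v := by
  classical
  set s : V → V := fun v => if h : v ∈ S then (s' ⟨v, h⟩).1 else (hE v).choose with hs
  have hstrat : Strat E s := by
    intro v
    by_cases h : v ∈ S
    · simp only [hs, dif_pos h]
      exact hs' ⟨v, h⟩
    · simp only [hs, dif_neg h]
      exact (hE v).choose_spec
  refine ⟨s, hstrat, ?_⟩
  intro v hv ρ hp hc h0
  have hin : ∀ n, ρ n ∈ S := by
    intro n
    induction n with
    | zero => rwa [h0]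
    | succ k ih =>
      by_cases hb : owner (ρ k) = b
      · rw [hc k hb]
        simp only [hs, dif_pos ih]
        exact (s' ⟨ρ k, ih⟩).2
      · exact htrap (ρ k) ih hb (ρ (k+1)) (hp k)
  set ρ' : ℕ → ↥S := fun n => ⟨ρ n, hin n⟩ with hρ'
  have hwin := hw ⟨v, h0 ▸ hin 0⟩ ρ' (fun n => hp n) ?_ (by simp [hρ', h0])
  · exact hwin
  · intro n hb
    apply Subtype.ext
    have h1 := hc n hb
    simp only [hρ']
    rw [h1]
    simp only [hs, dif_pos (hin n)]

lemma wins_prepend {b : Bool} {s : V → V} {ρ : ℕ → V}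
    (hp : IsPlay E ρ) (hc : Consistent owner b s ρ)
    (hw : WinsFrom owner E c b s (ρ 1)) : Wins c b ρ := by
  have := hw (fun n => ρ (n + 1)) (isPlay_tail hp 1) (consistent_tail hc 1) rfl
  exact (wins_tail 1).mp this

/-- the complement of a winning region is a trap for that player -/
lemma compl_winreg_trap (b : Bool) {v w : V}
    (hv : v ∉ WinReg owner E c b) (hb : owner v = b) (he : E v w) :
    w ∉ WinReg owner E c b := by
  classical
  intro hw
  obtain ⟨sw, hsws, hsww⟩ := hw
  by_cases hreach : Reach owner E b sw w v
  · exact hv ⟨sw, hsws, winsFrom_reach hsww hreach⟩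
  · apply hv
    refine ⟨Function.update sw v w, ?_, ?_⟩
    · intro x
      by_cases hx : x = v
      · subst hx
        rw [Function.update_self]
        exact he
      · rw [Function.update_of_ne hx]
        exact hsws x
    · intro ρ hp hc2 h0
      have hwv : w ≠ v := by
        intro hwv
        exact hreach (hwv ▸ reach_refl w)
      have h1 : ρ 1 = w := by
        rw [hc2 0 (h0 ▸ hb), h0, Function.update_self]
      have claim : ∀ n, 1 ≤ n → ρ n ≠ v ∧ Reach owner E b sw w (ρ n) := by
        intro n hn
        induction n with
        | zero => omega
        | succ k ih =>
          rcases Nat.lt_or_ge 1 (k+1) with h2 | h2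
          · obtain ⟨hne, hr⟩ := ih (by omega)
            have hstep : ρ (k+1) = sw (ρ k) ∨ owner (ρ k) ≠ b := by
              by_cases hbk : owner (ρ k) = b
              · left
                rw [hc2 k hbk, Function.update_of_ne hne]
              · right; exact hbk
            have hr2 : Reach owner E b sw w (ρ (k+1)) := by
              rcases hstep with h3 | h3
              · exact reach_step hr (hp k) (fun _ => h3)
              · exact reach_step hr (hp k) (fun hb2 => absurd hb2 h3)
            refine ⟨fun hveq => hreach (hveq ▸ hr2), hr2⟩
          · have hk1 : k + 1 = 1 := by omega
            rw [hk1, h1]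
            exact ⟨hwv, reach_refl w⟩
      have htail : Wins c b (fun n => ρ (n + 1)) := by
        apply hsww (fun n => ρ (n + 1)) (isPlay_tail hp 1) _ (by simpa using h1)
        intro n hbn
        have hne : ρ (n + 1) ≠ v := (claim (n+1) (by omega)).1
        have := hc2 (n+1) hbn
        rw [Function.update_of_ne hne] at this
        show ρ (n + 1 + 1) = sw (ρ (n + 1))
        exact this
      exact (wins_tail 1).mp htail

/-- if all successors of an opponent vertex are winning, the vertex is winning -/
lemma winreg_opp_closed (hE : ∀ v, ∃ w, E v w) {b : Bool} {v : V}
    (hall : ∀ w, E v w → w ∈ WinReg owner E c b) : v ∈ WinReg owner E c b := by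
  obtain ⟨σ, hσs, hσw⟩ := uniformization hE b
  refine ⟨σ, hσs, ?_⟩
  intro ρ hp hc2 h0
  exact wins_prepend hp hc2 (hσw (ρ 1) (hall (ρ 1) (h0 ▸ hp 0)))

/-- if player I wins a subgame on a region `P` avoiding his winning region,
from which player II can only escape into player I's winning region,
then `P` is part of player I's winning region: contradiction machine. -/
lemma combined_strategy (hE : ∀ v, ∃ w, E v w) {P : Set V}
    (hP : ∀ v ∈ P, v ∉ WinReg owner E c true)
    (hPclosed : ∀ v ∈ P, owner v = false → ∀ w, E v w →
        w ∈ WinReg owner E c true ∨ w ∈ P)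
    (sI : ↥P → ↥P) (hsI : ∀ x : ↥P, E x.1 (sI x).1)
    (x₀ : ↥P)
    (hwin : WinsFrom (fun y : ↥P => owner y.1) (fun x y : ↥P => E x.1 y.1)
      (fun y : ↥P => c y.1) true sI x₀) :
    x₀.1 ∈ WinReg owner E c true := by
  classical
  obtain ⟨σ, hσs, hσw⟩ := uniformization hE true
  set s : V → V := fun u =>
    if u ∈ WinReg owner E c true then σ u
    else if h : u ∈ P then (sI ⟨u, h⟩).1 else (hE u).choose with hs
  have hsW : ∀ u, u ∈ WinReg owner E c true → s u = σ u := by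
    intro u hu
    simp [hs, if_pos hu]
  have hsP : ∀ u (h : u ∈ P), s u = (sI ⟨u, h⟩).1 := by
    intro u h
    simp [hs, if_neg (hP u h), dif_pos h]
  refine ⟨s, ?_, ?_⟩
  · intro u
    by_cases h1 : u ∈ WinReg owner E c true
    · rw [hsW u h1]; exact hσs u
    · by_cases h2 : u ∈ P
      · rw [hsP u h2]; exact hsI ⟨u, h2⟩
      · simp only [hs, if_neg h1, dif_neg h2]
        exact (hE u).choose_spec
  intro ρ hp hcons h0
  have Wstep : ∀ n, ρ n ∈ WinReg owner E c true → ρ (n+1) ∈ WinReg owner E c true := by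
    intro n hn
    refine ⟨σ, hσs, winsFrom_step (hσw (ρ n) hn) (hp n) ?_⟩
    intro hb
    rw [hcons n hb]
    exact hsW _ hn
  have inv : ∀ n, ρ n ∈ WinReg owner E c true ∨ ρ n ∈ P := by
    intro n
    induction n with
    | zero => exact Or.inr (h0 ▸ x₀.2)
    | succ k ihk =>
      rcases ihk with hk | hk
      · exact Or.inl (Wstep k hk)
      · by_cases hb : owner (ρ k) = true
        · right
          have hsk : ρ (k+1) = (sI ⟨ρ k, hk⟩).1 := by rw [hcons k hb]; exact hsP _ hk
          rw [hsk]
          exact (sI ⟨ρ k, hk⟩).2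
        · exact hPclosed (ρ k) hk (by simpa using hb) (ρ (k+1)) (hp k)
  by_cases hW : ∃ N, ρ N ∈ WinReg owner E c true
  · obtain ⟨N, hN⟩ := hW
    have hall : ∀ k, ρ (k + N) ∈ WinReg owner E c true := by
      intro k
      induction k with
      | zero => simpa using hN
      | succ j ihj =>
        have := Wstep (j + N) ihj
        rwa [show j + N + 1 = j + 1 + N by omega] at this
    have htail : Wins c true (fun n => ρ (n + N)) := by
      apply hσw (ρ N) hN (fun n => ρ (n + N)) (isPlay_tail hp N) _ (by simp)
      intro n hb
      show ρ (n + 1 + N) = σ (ρ (n + N))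
      rw [show n + 1 + N = n + N + 1 by omega, hcons (n + N) hb]
      exact hsW _ (hall n)
    exact (wins_tail N).mp htail
  · push_neg at hW
    have hPall : ∀ n, ρ n ∈ P := fun n => (inv n).resolve_left (hW n)
    have hwins := hwin (fun n => ⟨ρ n, hPall n⟩) (fun n => hp n) ?_ (Subtype.ext h0)
    · exact hwins
    · intro n hb
      apply Subtype.ext
      show ρ (n+1) = (sI ⟨ρ n, hPall n⟩).1
      rw [hcons n hb]
      exact hsP _ (hPall n)

end Game

section Main
universe u

theorem posdet : ∀ (m : ℕ) (V : Type u) (owner : V → Bool) (E : V → V → Prop),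
    (∀ v, ∃ w, E v w) → ∀ (c : V → ℕ), (∀ v, c v ≤ m) → ∀ v : V,
    v ∈ WinReg owner E c true ∨ v ∈ WinReg owner E c false := by
  intro m
  induction m with
  | zero =>
    intro V owner E hE c hc v
    right
    refine ⟨fun v => (hE v).choose, fun v => (hE v).choose_spec, ?_⟩
    intro ρ _ _ _
    apply wins_false_of_zero
    have : {n | c (ρ n) = 0} = Set.univ := by
      ext n
      simpa using Nat.le_zero.mp (hc (ρ n))
    show {n | c (ρ n) = 0}.Infinite
    rw [this]
    exact Set.infinite_univ
  | succ m ih =>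
    intro V owner E hE c hc v₀
    classical
    by_cases hv₀ : v₀ ∈ WinReg owner E c true
    · exact Or.inl hv₀
    right
    -- Player I's winning region is a trap for him from outside
    have htrapS : ∀ v, v ∉ WinReg owner E c true → owner v = true →
        ∀ w, E v w → w ∉ WinReg owner E c true :=
      fun v hv hb w he => compl_winreg_trap true hv hb he
    have hsubS : ∀ v, v ∉ WinReg owner E c true →
        ∃ w, E v w ∧ w ∉ WinReg owner E c true := by
      intro v hv
      by_cases hb : owner v = true
      · obtain ⟨w, hw⟩ := hE v
        exact ⟨w, hw, htrapS v hv hb w hw⟩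
      · by_contra hcon
        push_neg at hcon
        exact hv (winreg_opp_closed hE hcon)
    set S : Set V := {v | v ∉ WinReg owner E c true} with hSdef
    have hE' : ∀ x : ↥S, ∃ y : ↥S, E x.1 y.1 := by
      intro x
      obtain ⟨w, hw, hwS⟩ := hsubS x.1 x.2
      exact ⟨⟨w, hwS⟩, hw⟩
    set T : Set ↥S := {x | c x.1 = 0} with hTdef
    set A : Set ↥S := Attr (fun x : ↥S => owner x.1) (fun x y : ↥S => E x.1 y.1) false T
      with hAdef
    have hS'c : ∀ x : ↥S, x ∉ A → 1 ≤ c x.1 := by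
      intro x hx
      have h1 := (compl_attr_trap hx).1
      have h2 : ¬ (c x.1 = 0) := h1
      omega
    have hS'false : ∀ x : ↥S, x ∉ A → owner x.1 = false → ∀ y : ↥S, E x.1 y.1 → y ∉ A := by
      intro x hx hb y hy
      exact (compl_attr_trap hx).2.1 hb y hy
    have hS'true : ∀ x : ↥S, x ∉ A → owner x.1 = true → ∃ y : ↥S, E x.1 y.1 ∧ y ∉ A := by
      intro x hx hb
      have h2 := (compl_attr_trap hx).2.2 (by simp [hb])
      rcases h2 with ⟨w, hw, hwA⟩ | hno
      · exact ⟨w, hw, hwA⟩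
      · exact absurd (hE' x) hno
    -- the sub-subgame region, as a subset of V
    set P : Set V := {v | ∃ h : v ∈ S, (⟨v, h⟩ : ↥S) ∉ A} with hPdef
    have hPS : ∀ v, v ∈ P → v ∈ S := fun v h => h.choose
    have hPA : ∀ x : ↥S, x.1 ∈ P ↔ x ∉ A := by
      intro x
      constructor
      · rintro ⟨h, h2⟩
        exact h2
      · intro h
        exact ⟨x.2, h⟩
    have hE'' : ∀ x : ↥P, ∃ y : ↥P, E x.1 y.1 := by
      intro x
      have hxS : x.1 ∈ S := hPS x.1 x.2
      have hxA : (⟨x.1, hxS⟩ : ↥S) ∉ A := (hPA ⟨x.1, hxS⟩).mp x.2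
      by_cases hb : owner x.1 = true
      · obtain ⟨y, hy, hyA⟩ := hS'true ⟨x.1, hxS⟩ hxA hb
        exact ⟨⟨y.1, (hPA y).mpr hyA⟩, hy⟩
      · obtain ⟨y, hy⟩ := hE' ⟨x.1, hxS⟩
        have hyA := hS'false ⟨x.1, hxS⟩ hxA (by simpa using hb) y hy
        exact ⟨⟨y.1, (hPA y).mpr hyA⟩, hy⟩
    have hc'' : ∀ x : ↥P, (fun y : ↥P => c y.1 - 1) x ≤ m := by
      intro x
      have h1 := hc x.1
      have hxS : x.1 ∈ S := hPS x.1 x.2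
      have h2 := hS'c ⟨x.1, hxS⟩ ((hPA ⟨x.1, hxS⟩).mp x.2)
      simp only
      omega
    have hIH := ih ↥P (fun y : ↥P => !(owner y.1)) (fun x y : ↥P => E x.1 y.1) hE''
      (fun y : ↥P => c y.1 - 1) hc''
    have hPge1 : ∀ (ρ : ℕ → ↥P) (n : ℕ), 1 ≤ (fun y : ↥P => c y.1) (ρ n) :=
      fun ρ n => hS'c ⟨(ρ n).1, hPS _ (ρ n).2⟩ ((hPA ⟨(ρ n).1, hPS _ (ρ n).2⟩).mp (ρ n).2)
    have hempty : ∀ x : ↥P, x ∉ WinReg (fun y : ↥P => owner y.1)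
        (fun x y : ↥P => E x.1 y.1) (fun y : ↥P => c y.1) true := by
      intro x hx
      obtain ⟨sI, hsIs, hsIw⟩ := hx
      have hPnotW : ∀ v ∈ P, v ∉ WinReg owner E c true := fun v hv => hPS v hv
      have hPclosed : ∀ v ∈ P, owner v = false → ∀ w, E v w →
          w ∈ WinReg owner E c true ∨ w ∈ P := by
        intro v hv hb w he
        by_cases hwW : w ∈ WinReg owner E c true
        · exact Or.inl hwW
        · right
          have hvS : v ∈ S := hPS v hv
          have hvA := (hPA ⟨v, hvS⟩).mp hv
          have hwA : (⟨w, hwW⟩ : ↥S) ∉ A := hS'false ⟨v, hvS⟩ hvA hb ⟨w, hwW⟩ he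
          exact (hPA ⟨w, hwW⟩).mpr hwA
      exact hPnotW x.1 x.2 (combined_strategy hE hPnotW hPclosed sI hsIs x hsIw)
    have hallII : ∀ x : ↥P, x ∈ WinReg (fun y : ↥P => owner y.1)
        (fun x y : ↥P => E x.1 y.1) (fun y : ↥P => c y.1) false := by
      intro x
      rcases hIH x with h | h
      · obtain ⟨s, hss, hw⟩ := h
        refine ⟨s, hss, ?_⟩
        intro ρ hp hcons h0
        have hcons' : Consistent (fun y : ↥P => !(owner y.1)) true s ρ := by
          intro n hb
          apply hcons n
          simp only [Bool.not_eq_true'] at hb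
          exact hb
        exact (wins_shift (c := fun y : ↥P => c y.1) (m := m + 1)
          (hPge1 ρ) (fun n => hc (ρ n).1) true).mp (hw ρ hp hcons' h0)
      · obtain ⟨s, hss, hw⟩ := h
        exfalso
        apply hempty x
        refine ⟨s, hss, ?_⟩
        intro ρ hp hcons h0
        have hcons' : Consistent (fun y : ↥P => !(owner y.1)) false s ρ := by
          intro n hb
          apply hcons n
          simp only [Bool.not_eq_false'] at hb
          exact hb
        exact (wins_shift (c := fun y : ↥P => c y.1) (m := m + 1)
          (hPge1 ρ) (fun n => hc (ρ n).1) false).mp (hw ρ hp hcons' h0)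
    obtain ⟨τP, hτPs, hτPw⟩ := uniformization (owner := fun y : ↥P => owner y.1)
      (E := fun x y : ↥P => E x.1 y.1) (c := fun y : ↥P => c y.1) hE'' false
    have hτPall : ∀ x : ↥P, WinsFrom (fun y : ↥P => owner y.1)
        (fun x y : ↥P => E x.1 y.1) (fun y : ↥P => c y.1) false τP x :=
      fun x => hτPw x (hallII x)
    -- the strategy for player II on `S`
    have hAT : ∀ x : ↥S, x ∈ A → x ∉ T → owner x.1 = false →
        ∃ y : ↥S, E x.1 y.1 ∧ y ∈ A ∧
          rankA (fun x : ↥S => owner x.1) (fun x y : ↥S => E x.1 y.1) false T y <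
          rankA (fun x : ↥S => owner x.1) (fun x y : ↥S => E x.1 y.1) false T x := by
      intro x hx h1 hb
      exact (attr_cases hx h1).1 hb
    set τ' : ↥S → ↥S := fun x =>
      if h1 : x ∉ A then ⟨(τP ⟨x.1, (hPA x).mpr h1⟩).1, hPS _ (τP ⟨x.1, (hPA x).mpr h1⟩).2⟩
      else if h2 : x ∉ T ∧ owner x.1 = false then
        (hAT x (not_not.mp h1) h2.1 h2.2).choose
      else (hE' x).choose with hτ'def
    have hτ'P : ∀ x : ↥S, ∀ h1 : x ∉ A, (τ' x).1 = (τP ⟨x.1, (hPA x).mpr h1⟩).1 := by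
      intro x h1
      rw [hτ'def]
      simp only [dif_pos h1]
    have hτ'A : ∀ x : ↥S, ∀ h1 : x ∈ A, ∀ h2 : x ∉ T, ∀ h3 : owner x.1 = false,
        τ' x = (hAT x h1 h2 h3).choose := by
      intro x h1 h2 h3
      rw [hτ'def]
      simp only [dif_neg (not_not_intro h1), dif_pos (And.intro h2 h3)]
    have hτ's : ∀ x : ↥S, E x.1 (τ' x).1 := by
      intro x
      by_cases h1 : x ∉ A
      · rw [hτ'P x h1]
        exact hτPs ⟨x.1, (hPA x).mpr h1⟩
      · by_cases h2 : x ∉ T ∧ owner x.1 = false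
        · rw [hτ'A x (not_not.mp h1) h2.1 h2.2]
          exact (hAT x (not_not.mp h1) h2.1 h2.2).choose_spec.1
        · rw [hτ'def]
          simp only [dif_neg h1, dif_neg h2]
          exact (hE' x).choose_spec
    have hsdec : ∀ x : ↥S,
        x ∈ Attr (fun x : ↥S => owner x.1) (fun x y : ↥S => E x.1 y.1) false T →
        x ∉ T → (fun x : ↥S => owner x.1) x = false →
        τ' x ∈ Attr (fun x : ↥S => owner x.1) (fun x y : ↥S => E x.1 y.1) false T ∧
          rankA (fun x : ↥S => owner x.1) (fun x y : ↥S => E x.1 y.1) false T (τ' x) <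
          rankA (fun x : ↥S => owner x.1) (fun x y : ↥S => E x.1 y.1) false T x := by
      intro x hx hT hb
      rw [hτ'A x hx hT hb]
      exact ⟨(hAT x hx hT hb).choose_spec.2.1, (hAT x hx hT hb).choose_spec.2.2⟩
    have hτ'win : ∀ x : ↥S, WinsFrom (fun y : ↥S => owner y.1) (fun x y : ↥S => E x.1 y.1)
        (fun y : ↥S => c y.1) false τ' x := by
      intro x ρ hp hcons h0
      by_cases hTinf : {n | ρ n ∈ T}.Infinite
      · apply wins_false_of_zero
        show {n | c (ρ n).1 = 0}.Infinite
        exact hTinf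
      · have hfin : ∃ N, ∀ n, N ≤ n → ρ n ∉ T := by
          by_contra hcon
          push_neg at hcon
          exact hTinf (inf_iff_unbdd.mpr (fun N => by
            obtain ⟨n, hn1, hn2⟩ := hcon N
            exact ⟨n, hn1, hn2⟩))
        obtain ⟨N, hN⟩ := hfin
        have hnotA : ∀ n, N ≤ n → ρ n ∉ A := by
          intro n hn hA
          obtain ⟨k, hk⟩ := attr_reach hsdec (fun j => ρ (j + n)) (isPlay_tail hp n)
            (consistent_tail hcons n) (by simpa using hA)
          exact hN (k + n) (by omega) hk
        have hPin : ∀ k, (ρ (k + N)).1 ∈ P :=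
          fun k => (hPA _).mpr (hnotA (k + N) (by omega))
        have htail := hτPall ⟨(ρ N).1, by simpa using hPin 0⟩
          (fun k => ⟨(ρ (k + N)).1, hPin k⟩) ?_ ?_ ?_
        · exact (wins_tail (c := fun y : ↥S => c y.1) (b := false) (ρ := ρ) N).mp htail
        · intro k
          show E (ρ (k + N)).1 (ρ (k + 1 + N)).1
          rw [show k + 1 + N = k + N + 1 by omega]
          exact hp (k + N)
        · intro k hb
          apply Subtype.ext
          show (ρ (k + 1 + N)).1 = (τP ⟨(ρ (k + N)).1, hPin k⟩).1
          rw [show k + 1 + N = k + N + 1 by omega]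
          have hstep := hcons (k + N) hb
          have h1 : ρ (k + N) ∉ A := hnotA (k + N) (by omega)
          have h2 := hτ'P (ρ (k + N)) h1
          rw [hstep]
          exact h2
        · apply Subtype.ext
          simp
    obtain ⟨sfin, hsfin, hwfin⟩ := trap_transfer (S := S) (b := false) (c := c) hE
      (fun v hv hnb w he => htrapS v hv (by simpa using hnb) w he) τ' hτ's hτ'win
    exact ⟨sfin, hsfin, hwfin v₀ hv₀⟩

end Main

end ParityDet


/-- The set of colors appearing infinitely often along a play
`v_init = p 0, q 0, p 1, q 1, …` of a game on a bipartite arena, where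
`c₁`, `c₂` are the colorings of the two parts. -/
def InfColors {V₁ V₂ : Type*} (c₁ : V₁ → ℕ) (c₂ : V₂ → ℕ)
    (p : ℕ → V₁) (q : ℕ → V₂) : Set ℕ :=
  {k | {n | c₁ (p n) = k}.Infinite ∨ {n | c₂ (q n) = k}.Infinite}

/-- Memoryless determinacy of parity games: on any game arena
`G = (V₁, V₂, E₁ ∪ E₂)` (a directed bipartite graph, possibly infinite, in which
every vertex has an outgoing edge), with initial vertex `v_init ∈ V₁` and a
coloring into `{0, …, m}`, either Player I has a memoryless strategy
`σ : V₁ → V₂` such that every consistent play has odd minimal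
infinitely-occurring color, or Player II has a memoryless strategy
`τ : V₂ → V₁` such that every consistent play has even (i.e. not odd) minimal
infinitely-occurring color. -/
theorem parity_memoryless_determinacy {V₁ V₂ : Type*}
    (E₁ : V₁ → V₂ → Prop) (E₂ : V₂ → V₁ → Prop)
    (h₁ : ∀ v, ∃ w, E₁ v w) (h₂ : ∀ w, ∃ v, E₂ w v)
    (vinit : V₁) (m : ℕ) (c₁ : V₁ → ℕ) (c₂ : V₂ → ℕ)
    (hc₁ : ∀ v, c₁ v ≤ m) (hc₂ : ∀ w, c₂ w ≤ m) :
    (∃ σ : V₁ → V₂, (∀ v, E₁ v (σ v)) ∧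
      ∀ (p : ℕ → V₁) (q : ℕ → V₂),
        p 0 = vinit → (∀ n, E₁ (p n) (q n)) → (∀ n, E₂ (q n) (p (n + 1))) →
        (∀ n, q n = σ (p n)) →
        Odd (sInf (InfColors c₁ c₂ p q))) ∨
    (∃ τ : V₂ → V₁, (∀ w, E₂ w (τ w)) ∧
      ∀ (p : ℕ → V₁) (q : ℕ → V₂),
        p 0 = vinit → (∀ n, E₁ (p n) (q n)) → (∀ n, E₂ (q n) (p (n + 1))) →
        (∀ n, p (n + 1) = τ (q n)) →
        ¬ Odd (sInf (InfColors c₁ c₂ p q))) := by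
  classical
  set V := V₁ ⊕ V₂ with hV
  set owner : V → Bool := Sum.elim (fun _ => true) (fun _ => false) with howner
  set E : V → V → Prop := fun x y =>
    match x, y with
    | Sum.inl v, Sum.inr w => E₁ v w
    | Sum.inr w, Sum.inl v => E₂ w v
    | _, _ => False
    with hE
  set c : V → ℕ := Sum.elim c₁ c₂ with hc
  have hEex : ∀ x : V, ∃ y : V, E x y := by
    rintro (v | w)
    · obtain ⟨w, hw⟩ := h₁ v
      exact ⟨Sum.inr w, hw⟩
    · obtain ⟨v, hv⟩ := h₂ w
      exact ⟨Sum.inl v, hv⟩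
  have hcb : ∀ x : V, c x ≤ m := by
    rintro (v | w)
    · exact hc₁ v
    · exact hc₂ w
  -- the merged play
  have merge : ∀ (p : ℕ → V₁) (q : ℕ → V₂), ∃ ρ : ℕ → V,
      (∀ k, ρ (2*k) = Sum.inl (p k)) ∧ (∀ k, ρ (2*k+1) = Sum.inr (q k)) := by
    intro p q
    refine ⟨fun n => if n % 2 = 0 then Sum.inl (p (n/2)) else Sum.inr (q (n/2)), ?_, ?_⟩
    · intro k
      have h1 : (2*k) % 2 = 0 := by omega
      have h2 : (2*k) / 2 = k := by omega
      simp [h1, h2]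
    · intro k
      have h1 : (2*k+1) % 2 = 1 := by omega
      have h2 : (2*k+1) / 2 = k := by omega
      simp [h1, h2]
  -- InfSet of merged play is InfColors
  have hinf : ∀ (p : ℕ → V₁) (q : ℕ → V₂) (ρ : ℕ → V),
      (∀ k, ρ (2*k) = Sum.inl (p k)) → (∀ k, ρ (2*k+1) = Sum.inr (q k)) →
      ParityDet.InfSet c ρ = InfColors c₁ c₂ p q := by
    intro p q ρ he ho
    ext k
    show {n | c (ρ n) = k}.Infinite ↔ _
    rw [ParityDet.inf_even_odd_iff]
    have h1 : {j | c (ρ (2*j)) = k} = {j | c₁ (p j) = k} := by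
      ext j
      rw [Set.mem_setOf_eq, he j]
      simp [hc]
    have h2 : {j | c (ρ (2*j+1)) = k} = {j | c₂ (q j) = k} := by
      ext j
      rw [Set.mem_setOf_eq, ho j]
      simp [hc]
    show {j | c (ρ (2*j)) = k}.Infinite ∨ {j | c (ρ (2*j+1)) = k}.Infinite ↔ _
    rw [h1, h2]
    rfl
  rcases ParityDet.posdet (m := m) V owner E hEex c hcb (Sum.inl vinit) with
    ⟨s, hss, hsw⟩ | ⟨s, hss, hsw⟩
  · -- Player I wins
    left
    have hσ : ∀ v : V₁, ∃ w : V₂, s (Sum.inl v) = Sum.inr w ∧ E₁ v w := by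
      intro v
      have := hss (Sum.inl v)
      rcases hs : s (Sum.inl v) with v' | w
      · rw [hs] at this
        exact absurd this (by simp [hE])
      · rw [hs] at this
        exact ⟨w, rfl, this⟩
    choose σ hσ1 hσ2 using hσ
    refine ⟨σ, hσ2, ?_⟩
    intro p q hp0 he1 he2 hqσ
    obtain ⟨ρ, hρe, hρo⟩ := merge p q
    have hplay : ParityDet.IsPlay E ρ := by
      intro n
      rcases Nat.even_or_odd n with ⟨j, hj⟩ | ⟨j, hj⟩
      · have hn : n = 2*j := by omega
        subst hn
        rw [hρe j, show 2*j+1 = 2*j+1 from rfl, hρo j]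
        exact he1 j
      · have hn : n = 2*j+1 := by omega
        subst hn
        rw [hρo j, show 2*j+1+1 = 2*(j+1) from by omega, hρe (j+1)]
        exact he2 j
    have hcons : ParityDet.Consistent owner true s ρ := by
      intro n hb
      rcases Nat.even_or_odd n with ⟨j, hj⟩ | ⟨j, hj⟩
      · have hn : n = 2*j := by omega
        subst hn
        rw [show 2*j+1 = 2*j+1 from rfl, hρo j, hρe j, hσ1 (p j), hqσ j]
      · have hn : n = 2*j+1 := by omega
        subst hn
        rw [hρo j] at hb
        simp [howner] at hb
    have hwins := hsw ρ hplay hcons (by rw [show (0:ℕ) = 2*0 from rfl, hρe 0, hp0])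
    have := hwins.mpr rfl
    rwa [show ParityDet.InfSet c ρ = InfColors c₁ c₂ p q from hinf p q ρ hρe hρo] at this
  · -- Player II wins
    right
    have hτ : ∀ w : V₂, ∃ v : V₁, s (Sum.inr w) = Sum.inl v ∧ E₂ w v := by
      intro w
      have := hss (Sum.inr w)
      rcases hs : s (Sum.inr w) with v | w'
      · rw [hs] at this
        exact ⟨v, rfl, this⟩
      · rw [hs] at this
        exact absurd this (by simp [hE])
    choose τ hτ1 hτ2 using hτ
    refine ⟨τ, hτ2, ?_⟩
    intro p q hp0 he1 he2 hpτ
    obtain ⟨ρ, hρe, hρo⟩ := merge p q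
    have hplay : ParityDet.IsPlay E ρ := by
      intro n
      rcases Nat.even_or_odd n with ⟨j, hj⟩ | ⟨j, hj⟩
      · have hn : n = 2*j := by omega
        subst hn
        rw [hρe j, show 2*j+1 = 2*j+1 from rfl, hρo j]
        exact he1 j
      · have hn : n = 2*j+1 := by omega
        subst hn
        rw [hρo j, show 2*j+1+1 = 2*(j+1) from by omega, hρe (j+1)]
        exact he2 j
    have hcons : ParityDet.Consistent owner false s ρ := by
      intro n hb
      rcases Nat.even_or_odd n with ⟨j, hj⟩ | ⟨j, hj⟩
      · have hn : n = 2*j := by omega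
        subst hn
        rw [hρe j] at hb
        simp [howner] at hb
      · have hn : n = 2*j+1 := by omega
        subst hn
        rw [show 2*j+1+1 = 2*(j+1) from by omega, hρe (j+1), hρo j, hτ1 (q j), hpτ j]
    have hwins := hsw ρ hplay hcons (by rw [show (0:ℕ) = 2*0 from rfl, hρe 0, hp0])
    intro hodd
    rw [← show ParityDet.InfSet c ρ = InfColors c₁ c₂ p q from hinf p q ρ hρe hρo] at hodd
    exact absurd (hwins.mp hodd) (by simp)
end

section
/- Let α and β be finite nonempty alphabets and let A be a finite deterministic parity automaton over the alphabet α × β, and let W ⊆ (ℕ → α) × (ℕ → β) be the relation it defines, i.e., (x, y) ∈ W iff A accepts the ω-word n ↦ (x n, y n). Then either there is a finite-state causal operator F : (ℕ → α) → (ℕ → β) such that (X, F X) ∈ W for every X, or there is a finite-state strongly causal operator G : (ℕ → β) → (ℕ → α) such that (G Y, Y) ∉ W for every Y. -/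
/-- An operator `F` between ω-sequences is *causal* (a C-operator) if
`F x t` depends only on `x 0, …, x t`. -/
def Causal {α β : Type} (F : (ℕ → α) → (ℕ → β)) : Prop :=
  ∀ x y : ℕ → α, ∀ t : ℕ, (∀ s ≤ t, x s = y s) → ∀ s ≤ t, F x s = F y s

/-- An operator `F` between ω-sequences is *strongly causal* (an SC-operator) if
`F x t` depends only on `x 0, …, x (t−1)`. -/
def StronglyCausal {α β : Type} (F : (ℕ → α) → (ℕ → β)) : Prop :=
  ∀ x y : ℕ → α, ∀ t : ℕ, (∀ s < t, x s = y s) → F x t = F y t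

/-- A strongly causal operator is *finite state* if it is computed by a Mealey
automaton with a finite state set. -/
def FiniteStateStronglyCausal {α β : Type} (F : (ℕ → α) → (ℕ → β)) : Prop :=
  ∃ (Q : Type) (_ : Fintype Q) (δ : Q → α → Q) (q₀ : Q) (out : Q → β),
    ∀ (x : ℕ → α) (n : ℕ),
      F x n = out (((List.range n).map x).foldl δ q₀)

/-- Acceptance by a deterministic parity automaton `(Q, δ, q₀, col)`: the
minimal color of a state visited infinitely often along the run on the
ω-word `a` is even. -/
def ParityAccepts {Q σ : Type*} (δ : Q → σ → Q) (q₀ : Q) (col : Q → ℕ)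
    (a : ℕ → σ) : Prop :=
  Even (sInf {k | ∃ q, {n | ((List.range (n + 1)).map a).foldl δ q₀ = q}.Infinite ∧
    col q = k})

/-!
Player I writes `x n`, Player II answers `y n`, and the automaton reads `(x n, y n)`: this is a
parity game on the finite arena `Q ⊕ Q × α`, in which Player I moves at the states `q` and
Player II at the half-read letters `(q, x n)`. Finite parity games are positionally determined, by
Zielonka's recursion: the player `p` of the parity of the least colour `m` attracts to the vertices
of colour `m`; if `p` wins the rest, then `p` wins everywhere, and otherwise the opponent's region
of the rest, together with its attractor, is removed and the recursion continues. A positional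
strategy on this arena is a Moore machine (for Player II) or a Mealy machine (for Player I) with
state set `Q`, running the automaton alongside the play.
-/

open Filter Set

section InfinitelyOften

variable {β : Type*}

def infinitelyOften (u : ℕ → β) : Set β := {b | ∃ᶠ n in atTop, u n = b}

lemma infinitelyOften_comp {f : ℕ → ℕ} (hf : map f atTop = atTop) (u : ℕ → β) :
    infinitelyOften (u ∘ f) = infinitelyOften u := by
  ext b
  change (∃ᶠ n in atTop, u (f n) = b) ↔ ∃ᶠ n in atTop, u n = b
  rw [← frequently_map (P := (u · = b)), hf]

lemma sInf_infinitelyOften_eq {u : ℕ → ℕ} {m : ℕ} (hm : ∃ᶠ n in atTop, u n = m)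
    (hle : ∀ n, m ≤ u n) : sInf (infinitelyOften u) = m :=
  le_antisymm (Nat.sInf_le hm) <| le_csInf ⟨m, hm⟩ fun _ hk ↦ by
    obtain ⟨n, rfl⟩ := hk.exists
    exact hle n

lemma setOf_exists_infinite_eq_infinitelyOften {Q : Type*} [Finite Q] (r : ℕ → Q)
    (col : Q → β) :
    {k | ∃ q, {n | r n = q}.Infinite ∧ col q = k} = infinitelyOften (col ∘ r) := by
  ext k
  simp only [infinitelyOften, mem_ofPred_eq, Function.comp_apply,
    ← Nat.frequently_atTop_iff_infinite]
  constructor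
  · rintro ⟨q, hq, rfl⟩
    exact hq.mono fun n hn ↦ by rw [hn]
  · intro hk
    by_contra! h
    have hq : ∀ q, ∀ᶠ n in atTop, col q = k → r n ≠ q := fun q ↦ by
      by_cases hq : col q = k
      · exact (not_frequently.1 fun h' ↦ h q h' hq).mono fun n hn _ ↦ hn
      · exact Eventually.of_forall fun _ h' ↦ absurd h' hq
    exact hk ((eventually_all.2 hq).mono fun n hn hnk ↦ hn (r n) hnk rfl)

end InfinitelyOften

structure ParityGame (V : Type*) where
  owner : V → Bool
  Move : V → V → Prop
  color : V → ℕ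

namespace ParityGame

variable {V : Type*} (G : ParityGame V)

def IsSubarena (S : Set V) : Prop := ∀ v ∈ S, ∃ w ∈ S, G.Move v w

def IsPlay (S : Set V) (π : ℕ → V) : Prop := (∀ n, π n ∈ S) ∧ ∀ n, G.Move (π n) (π (n + 1))

def Follows (p : Bool) (σ : V → V) (π : ℕ → V) : Prop :=
  ∀ n, G.owner (π n) = p → π (n + 1) = σ (π n)

noncomputable def winner (π : ℕ → V) : Bool := decide (Even (sInf (infinitelyOften (G.color ∘ π))))

variable {G}

lemma IsPlay.mono {S T : Set V} {π : ℕ → V} (hπ : G.IsPlay S π) (hST : S ⊆ T) : G.IsPlay T π :=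
  ⟨fun n ↦ hST (hπ.1 n), hπ.2⟩

lemma IsPlay.shift {S : Set V} {π : ℕ → V} (hπ : G.IsPlay S π) (k : ℕ) :
    G.IsPlay S (fun n ↦ π (n + k)) :=
  ⟨fun n ↦ hπ.1 _, fun n ↦ by simpa only [add_right_comm] using hπ.2 (n + k)⟩

lemma winner_shift (π : ℕ → V) (k : ℕ) : G.winner (fun n ↦ π (n + k)) = G.winner π := by
  simp only [winner]
  rw [← infinitelyOften_comp (map_add_atTop_eq_nat k) (G.color ∘ π)]
  rfl

variable (G)

/-- By the closure conditions, `winner_eq` says that `σ` wins every play of `S` that starts in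
`W`. -/
structure IsWinningRegion (S : Set V) (p : Bool) (W : Set V) (σ : V → V) : Prop where
  subset : W ⊆ S
  strategy_mem : ∀ v ∈ W, G.owner v = p → σ v ∈ W ∧ G.Move v (σ v)
  move_mem : ∀ v ∈ W, G.owner v ≠ p → ∀ w ∈ S, G.Move v w → w ∈ W
  winner_eq : ∀ π, G.IsPlay W π → G.Follows p σ π → G.winner π = p

def Determined (S : Set V) : Prop :=
  ∀ p, ∃ W₁ σ₁ W₂ σ₂, W₁ ∪ W₂ = S ∧ G.IsWinningRegion S p W₁ σ₁ ∧ G.IsWinningRegion S (!p) W₂ σ₂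

variable {G}

lemma isWinningRegion_empty (S : Set V) (p : Bool) (σ : V → V) : G.IsWinningRegion S p ∅ σ where
  subset := empty_subset S
  strategy_mem _ h := h.elim
  move_mem _ h := h.elim
  winner_eq _ hπ := (hπ.1 0).elim

lemma determined_of_regions {S W₁ W₂ : Set V} {p : Bool} {σ₁ σ₂ : V → V} (h : W₁ ∪ W₂ = S)
    (h₁ : G.IsWinningRegion S p W₁ σ₁) (h₂ : G.IsWinningRegion S (!p) W₂ σ₂) : G.Determined S := by
  intro r
  rcases Bool.eq_or_eq_not r p with rfl | rfl
  · exact ⟨W₁, σ₁, W₂, σ₂, h, h₁, h₂⟩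
  · exact ⟨W₂, σ₂, W₁, σ₁, union_comm W₁ W₂ ▸ h, h₂, by rwa [Bool.not_not]⟩

namespace IsWinningRegion

variable {S W : Set V} {p : Bool} {σ : V → V} {π : ℕ → V}

lemma mem_of_mem (hW : G.IsWinningRegion S p W σ) (hπ : G.IsPlay S π)
    (hσ : ∀ n, π n ∈ W → G.owner (π n) = p → π (n + 1) = σ (π n)) {k : ℕ} (hk : π k ∈ W) :
    ∀ n, π (n + k) ∈ W := by
  intro n
  induction n with
  | zero => simpa using hk
  | succ n ih =>
    rw [add_right_comm]
    by_cases ho : G.owner (π (n + k)) = p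
    · exact hσ _ ih ho ▸ (hW.strategy_mem _ ih ho).1
    · exact hW.move_mem _ ih ho _ (hπ.1 _) (hπ.2 _)

lemma winner_eq_of_mem (hW : G.IsWinningRegion S p W σ) (hπ : G.IsPlay S π)
    (hσ : ∀ n, π n ∈ W → G.owner (π n) = p → π (n + 1) = σ (π n)) {k : ℕ} (hk : π k ∈ W) :
    G.winner π = p := by
  have hstay := hW.mem_of_mem hπ hσ hk
  rw [← winner_shift π k]
  refine hW.winner_eq _ ⟨hstay, (hπ.shift k).2⟩ fun n ho ↦ ?_
  simpa only [add_right_comm] using hσ _ (hstay n) ho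

end IsWinningRegion

/-! ### Attractors -/

section Attractor

variable (G) (p : Bool) (S T : Set V)

def attrN : ℕ → Set V
  | 0 => T
  | n + 1 => attrN n ∪ {v | v ∈ S ∧ (G.owner v = p ∧ (∃ w ∈ attrN n, G.Move v w) ∨
      G.owner v ≠ p ∧ ∀ w ∈ S, G.Move v w → w ∈ attrN n)}

def attr : Set V := ⋃ n, G.attrN p S T n

noncomputable def attrRank (v : V) : ℕ := sInf {n | v ∈ G.attrN p S T n}

open Classical in
/-- The fallback keeps the strategy legal on `T`, where the rank cannot decrease. -/
noncomputable def attrStrategy (v : V) : V :=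
  if h : ∃ w ∈ G.attrN p S T (G.attrRank p S T v - 1), G.Move v w then h.choose
  else if h : ∃ w ∈ S, G.Move v w then h.choose else v

variable {G p S T}

lemma attrN_zero : G.attrN p S T 0 = T := rfl

lemma attrN_succ (n : ℕ) : G.attrN p S T (n + 1) = G.attrN p S T n ∪
    {v | v ∈ S ∧ (G.owner v = p ∧ (∃ w ∈ G.attrN p S T n, G.Move v w) ∨
      G.owner v ≠ p ∧ ∀ w ∈ S, G.Move v w → w ∈ G.attrN p S T n)} := rfl

lemma attrN_mono : Monotone (G.attrN p S T) :=
  monotone_nat_of_le_succ fun n ↦ (attrN_succ n).symm ▸ subset_union_left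

lemma attrN_subset_attr (n : ℕ) : G.attrN p S T n ⊆ G.attr p S T :=
  subset_iUnion (G.attrN p S T) n

lemma subset_attr : T ⊆ G.attr p S T := by
  simpa only [attrN_zero] using attrN_subset_attr (G := G) (p := p) (S := S) (T := T) 0

lemma attr_subset (hT : T ⊆ S) : G.attr p S T ⊆ S := by
  refine iUnion_subset fun n ↦ ?_
  induction n with
  | zero => exact hT
  | succ n ih => exact attrN_succ n ▸ union_subset ih fun v hv ↦ hv.1

lemma mem_attr_of_move {v w : V} (hv : v ∈ S) (ho : G.owner v = p) (hvw : G.Move v w)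
    (hw : w ∈ G.attr p S T) : v ∈ G.attr p S T := by
  obtain ⟨n, hn⟩ := mem_iUnion.1 hw
  exact attrN_subset_attr (n + 1) (by rw [attrN_succ]; exact Or.inr ⟨hv, Or.inl ⟨ho, w, hn, hvw⟩⟩)

lemma mem_attr_of_forall_move [Finite V] {v : V} (hv : v ∈ S) (ho : G.owner v ≠ p)
    (h : ∀ w ∈ S, G.Move v w → w ∈ G.attr p S T) : v ∈ G.attr p S T := by
  obtain ⟨N, hN⟩ := ((toFinite {w | w ∈ S ∧ G.Move v w}).image (G.attrRank p S T)).bddAbove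
  refine attrN_subset_attr (N + 1) ?_
  rw [attrN_succ]
  refine Or.inr ⟨hv, Or.inr ⟨ho, fun w hw hvw ↦ ?_⟩⟩
  obtain ⟨n, hn⟩ := mem_iUnion.1 (h w hw hvw)
  exact attrN_mono (hN ⟨w, ⟨hw, hvw⟩, rfl⟩) (Nat.sInf_mem (s := {n | w ∈ G.attrN p S T n}) ⟨n, hn⟩)

lemma attrRank_le {v : V} {n : ℕ} (h : v ∈ G.attrN p S T n) : G.attrRank p S T v ≤ n :=
  Nat.sInf_le h

lemma attrRank_spec {v : V} (hv : v ∈ G.attr p S T) (hvT : v ∉ T) :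
    G.owner v = p ∧ (∃ w ∈ G.attrN p S T (G.attrRank p S T v - 1), G.Move v w) ∨
      G.owner v ≠ p ∧ ∀ w ∈ S, G.Move v w → w ∈ G.attrN p S T (G.attrRank p S T v - 1) := by
  obtain ⟨n, hn⟩ := mem_iUnion.1 hv
  have hmem : v ∈ G.attrN p S T (G.attrRank p S T v) :=
    Nat.sInf_mem (s := {n | v ∈ G.attrN p S T n}) ⟨n, hn⟩
  obtain ⟨r, hr⟩ : ∃ r, G.attrRank p S T v = r + 1 :=
    Nat.exists_eq_succ_of_ne_zero fun h0 ↦ hvT (by rwa [h0] at hmem)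
  rw [hr, attrN_succ] at hmem
  rw [hr, Nat.add_sub_cancel]
  refine (hmem.resolve_left fun h ↦ ?_).2
  have := attrRank_le h
  omega

lemma attrStrategy_spec {v : V} (hv : v ∈ G.attr p S T) (hvT : v ∉ T) (ho : G.owner v = p) :
    G.attrStrategy p S T v ∈ G.attrN p S T (G.attrRank p S T v - 1) ∧
      G.Move v (G.attrStrategy p S T v) := by
  have h : ∃ w ∈ G.attrN p S T (G.attrRank p S T v - 1), G.Move v w := by
    rcases attrRank_spec hv hvT with h | h
    · exact h.2
    · exact absurd ho h.1
  rw [attrStrategy, dif_pos h]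
  exact h.choose_spec

lemma attrStrategy_mem (hT : T ⊆ S) (hS : G.IsSubarena S) {v : V} (hv : v ∈ S) :
    G.attrStrategy p S T v ∈ S ∧ G.Move v (G.attrStrategy p S T v) := by
  unfold attrStrategy
  split_ifs with h
  · exact ⟨attr_subset hT (attrN_subset_attr _ h.choose_spec.1), h.choose_spec.2⟩
  · exact (Classical.choose_spec (hS v hv))
  · exact absurd (hS v hv) ‹_›

lemma IsSubarena.diff_attr [Finite V] (hS : G.IsSubarena S) : G.IsSubarena (S \ G.attr p S T) := by
  rintro v ⟨hvS, hvA⟩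
  by_cases ho : G.owner v = p
  · obtain ⟨w, hw, hvw⟩ := hS v hvS
    exact ⟨w, ⟨hw, fun hwA ↦ hvA (mem_attr_of_move hvS ho hvw hwA)⟩, hvw⟩
  · by_contra! h
    exact hvA (mem_attr_of_forall_move hvS ho fun w hw hvw ↦ not_not.1 fun hwA ↦ h w ⟨hw, hwA⟩ hvw)

/-- The rank strictly decreases along such a play until it reaches `T`. -/
lemma exists_mem_of_mem_attr {π : ℕ → V} (hπ : G.IsPlay S π)
    (hσ : ∀ n, π n ∈ G.attr p S T → π n ∉ T → G.owner (π n) = p →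
      π (n + 1) = G.attrStrategy p S T (π n)) {k : ℕ} (hk : π k ∈ G.attr p S T) :
    ∃ j, k ≤ j ∧ π j ∈ T := by
  obtain ⟨r, hr⟩ := mem_iUnion.1 hk
  induction r generalizing k with
  | zero => exact ⟨k, le_rfl, by rwa [attrN_zero] at hr⟩
  | succ r ih =>
    by_cases hkT : π k ∈ T
    · exact ⟨k, le_rfl, hkT⟩
    have hrank := attrRank_le hr
    have hnext : π (k + 1) ∈ G.attrN p S T r := by
      refine attrN_mono (show G.attrRank p S T (π k) - 1 ≤ r by omega) ?_
      rcases attrRank_spec hk hkT with ⟨ho, -⟩ | ⟨ho, hall⟩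
      · exact hσ k hk hkT ho ▸ (attrStrategy_spec hk hkT ho).1
      · exact hall _ (hπ.1 _) (hπ.2 k)
    obtain ⟨j, hj, hjT⟩ := ih (attrN_subset_attr r hnext) hnext
    exact ⟨j, by omega, hjT⟩

end Attractor

/-! ### Zielonka's recursion -/

namespace IsWinningRegion

variable {p : Bool} {S T W : Set V} {σ : V → V}

/-- Player `p` cannot move from `S \ G.attr p S T` into the attractor. -/
lemma of_diff_attr (hW : G.IsWinningRegion (S \ G.attr p S T) (!p) W σ) :
    G.IsWinningRegion S (!p) W σ where
  subset := hW.subset.trans sdiff_subset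
  strategy_mem := hW.strategy_mem
  move_mem v hv ho w hw hvw := by
    have hvS := hW.subset hv
    refine hW.move_mem v hv ho w ⟨hw, fun hwA ↦ hvS.2 ?_⟩ hvw
    exact mem_attr_of_move hvS.1 (Bool.ne_not.1 ho) hvw hwA
  winner_eq := hW.winner_eq

open Classical in
lemma attr (hW : G.IsWinningRegion S p W σ) :
    G.IsWinningRegion S p (G.attr p S W)
      (fun v ↦ if v ∈ W then σ v else G.attrStrategy p S W v) where
  subset := attr_subset hW.subset
  strategy_mem v hv ho := by
    by_cases hvW : v ∈ W
    · simp only [if_pos hvW]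
      exact ⟨subset_attr (hW.strategy_mem v hvW ho).1, (hW.strategy_mem v hvW ho).2⟩
    · simp only [if_neg hvW]
      exact ⟨attrN_subset_attr _ (attrStrategy_spec hv hvW ho).1, (attrStrategy_spec hv hvW ho).2⟩
  move_mem v hv ho w hw hvw := by
    by_cases hvW : v ∈ W
    · exact subset_attr (hW.move_mem v hvW ho w hw hvw)
    · rcases attrRank_spec hv hvW with ⟨ho', -⟩ | ⟨-, hall⟩
      · exact absurd ho' ho
      · exact attrN_subset_attr _ (hall w hw hvw)
  winner_eq π hπ hσ := by
    have hπS := hπ.mono (attr_subset hW.subset)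
    by_cases hk : ∃ k, π k ∈ W
    · obtain ⟨k, hk⟩ := hk
      exact hW.winner_eq_of_mem hπS (fun n hn ho ↦ (hσ n ho).trans (if_pos hn)) hk
    · rw [not_exists] at hk
      obtain ⟨j, -, hj⟩ :=
        exists_mem_of_mem_attr hπS (fun n _ hn ho ↦ (hσ n ho).trans (if_neg hn)) (hπ.1 0)
      exact absurd hj (hk j)

open Classical in
lemma union {B : Set V} {τ : V → V} (hB : G.IsWinningRegion S p B τ)
    (hW : G.IsWinningRegion (S \ B) p W σ) :
    G.IsWinningRegion S p (B ∪ W) (fun v ↦ if v ∈ B then τ v else σ v) where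
  subset := union_subset hB.subset (hW.subset.trans sdiff_subset)
  strategy_mem v hv ho := by
    by_cases hvB : v ∈ B
    · simp only [if_pos hvB]
      exact ⟨Or.inl (hB.strategy_mem v hvB ho).1, (hB.strategy_mem v hvB ho).2⟩
    · simp only [if_neg hvB]
      have hvW := hv.resolve_left hvB
      exact ⟨Or.inr (hW.strategy_mem v hvW ho).1, (hW.strategy_mem v hvW ho).2⟩
  move_mem v hv ho w hw hvw := by
    by_cases hvB : v ∈ B
    · exact Or.inl (hB.move_mem v hvB ho w hw hvw)
    · by_cases hwB : w ∈ B
      · exact Or.inl hwB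
      · exact Or.inr (hW.move_mem v (hv.resolve_left hvB) ho w ⟨hw, hwB⟩ hvw)
  winner_eq π hπ hσ := by
    by_cases hk : ∃ k, π k ∈ B
    · obtain ⟨k, hk⟩ := hk
      exact hB.winner_eq_of_mem (hπ.mono (union_subset hB.subset (hW.subset.trans sdiff_subset)))
        (fun n hn ho ↦ (hσ n ho).trans (if_pos hn)) hk
    · rw [not_exists] at hk
      exact hW.winner_eq π ⟨fun n ↦ (hπ.1 n).resolve_left (hk n), hπ.2⟩
        fun n ho ↦ (hσ n ho).trans (if_neg (hk n))

end IsWinningRegion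

variable {p : Bool} {S : Set V}

open Classical in
/-- A play that keeps returning to the attractor sees the least colour `m` infinitely often. -/
lemma isWinningRegion_of_diff_attr_minColor {m : ℕ} {N : Set V} {σ : V → V}
    (hS : G.IsSubarena S) (hNS : N ⊆ S) (hN : ∀ v ∈ N, G.color v = m)
    (hm : ∀ v ∈ S, m ≤ G.color v) (hp : decide (Even m) = p)
    (hW : G.IsWinningRegion (S \ G.attr p S N) p (S \ G.attr p S N) σ) :
    G.IsWinningRegion S p S (fun v ↦ if v ∈ G.attr p S N then G.attrStrategy p S N v else σ v) where
  subset := subset_rfl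
  strategy_mem v hv ho := by
    by_cases hvA : v ∈ G.attr p S N
    · rw [if_pos hvA]
      exact attrStrategy_mem hNS hS hv
    · rw [if_neg hvA]
      exact ⟨(hW.strategy_mem v ⟨hv, hvA⟩ ho).1.1, (hW.strategy_mem v ⟨hv, hvA⟩ ho).2⟩
  move_mem _ _ _ _ hw _ := hw
  winner_eq π hπ hσ := by
    by_cases hk : ∃ k, ∀ n, π (n + k) ∉ G.attr p S N
    · obtain ⟨k, hk⟩ := hk
      rw [← winner_shift π k]
      refine hW.winner_eq _ ⟨fun n ↦ ⟨hπ.1 _, hk n⟩, (hπ.shift k).2⟩ fun n ho ↦ ?_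
      rw [add_right_comm]
      exact (hσ _ ho).trans (if_neg (hk n))
    · have hfreq : ∃ᶠ n in atTop, π n ∈ N := by
        refine frequently_atTop.2 fun k ↦ ?_
        obtain ⟨n, hn⟩ := not_forall.1 (not_exists.1 hk k)
        obtain ⟨j, hj, hjN⟩ := exists_mem_of_mem_attr hπ
          (fun i hi _ ho ↦ (hσ i ho).trans (if_pos hi)) (not_not.1 hn)
        exact ⟨j, by omega, hjN⟩
      rw [winner, sInf_infinitelyOften_eq (u := G.color ∘ π) (hfreq.mono fun n hn ↦ hN _ hn)
        fun n ↦ hm _ (hπ.1 n)]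
      exact hp

lemma determined_of_attr {T : Set V} {τ : V → V}
    (hA : G.IsWinningRegion S p (G.attr p S T) τ) (h : G.Determined (S \ G.attr p S T)) :
    G.Determined S := by
  obtain ⟨W₁, σ₁, W₂, σ₂, hcover, h₁, h₂⟩ := h p
  refine determined_of_regions ?_ (hA.union h₁) h₂.of_diff_attr
  rw [union_assoc, hcover, union_sdiff_cancel hA.subset]

theorem determined [Finite V] (S : Set V) (hS : G.IsSubarena S) : G.Determined S := by
  induction S using WellFoundedLT.induction with | _ S ih => ?_
  rcases S.eq_empty_or_nonempty with rfl | hne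
  · exact determined_of_regions (p := true) (union_empty ∅) (isWinningRegion_empty ∅ _ id)
      (isWinningRegion_empty ∅ _ id)
  set m := sInf (G.color '' S)
  obtain ⟨u, hu, hum⟩ : m ∈ G.color '' S := Nat.sInf_mem (hne.image _)
  set p := decide (Even m)
  set N := {v | v ∈ S ∧ G.color v = m}
  obtain ⟨W₁, σ₁, W₂, σ₂, hcover, h₁, h₂⟩ :=
    ih _ (sdiff_ssubset_left_iff.2 ⟨u, hu, subset_attr (show u ∈ N from ⟨hu, hum⟩)⟩)
      (hS.diff_attr (p := p)) p
  rcases W₂.eq_empty_or_nonempty with rfl | ⟨w, hw⟩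
  · rw [union_empty] at hcover
    have hS₁ := isWinningRegion_of_diff_attr_minColor (N := N) hS (fun v hv ↦ hv.1)
      (fun v hv ↦ hv.2) (fun v hv ↦ Nat.sInf_le ⟨v, hv, rfl⟩) rfl (hcover ▸ h₁)
    exact determined_of_regions (union_empty S) hS₁ (isWinningRegion_empty S _ id)
  · exact determined_of_attr h₂.of_diff_attr.attr
      (ih _ (sdiff_ssubset_left_iff.2 ⟨w, (h₂.subset hw).1, subset_attr hw⟩) hS.diff_attr)

end ParityGame

/-! ### The game of a parity automaton -/

namespace Automaton

variable {σ Q : Type*} (δ : Q → σ → Q) (q₀ : Q)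

def run (a : ℕ → σ) (n : ℕ) : Q := ((List.range n).map a).foldl δ q₀

lemma run_succ (a : ℕ → σ) (n : ℕ) : run δ q₀ a (n + 1) = δ (run δ q₀ a n) (a n) := by
  simp [run, List.range_succ]

lemma run_feedback {γ : Type*} (g : Q → γ → σ) (c : ℕ → γ) (n : ℕ) :
    run (fun q z ↦ δ q (g q z)) q₀ c n =
      run δ q₀ (fun i ↦ g (run (fun q z ↦ δ q (g q z)) q₀ c i) (c i)) n := by
  induction n with
  | zero => rfl
  | succ n ih => rw [run_succ, run_succ, ih]

lemma parityAccepts_iff [Finite Q] (col : Q → ℕ) (a : ℕ → σ) :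
    ParityAccepts δ q₀ col a ↔ Even (sInf (infinitelyOften (col ∘ run δ q₀ a))) := by
  rw [ParityAccepts, ← infinitelyOften_comp (map_add_atTop_eq_nat 1) (col ∘ run δ q₀ a)]
  exact Iff.of_eq (congrArg (Even ∘ sInf)
    (setOf_exists_infinite_eq_infinitelyOften (fun n ↦ run δ q₀ a (n + 1)) col))

end Automaton

lemma FiniteStateCausal.causal {α β : Type} {F : (ℕ → α) → (ℕ → β)} (hF : FiniteStateCausal F) :
    Causal F := by
  obtain ⟨Q, _, δ, q₀, out, hF⟩ := hF
  intro x y t hxy s hs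
  have hpre : (List.range s).map x = (List.range s).map y :=
    List.map_congr_left fun i hi ↦ hxy i ((List.mem_range.1 hi).le.trans hs)
  rw [hF x, hF y, hpre, hxy s hs]

lemma FiniteStateStronglyCausal.stronglyCausal {α β : Type} {F : (ℕ → α) → (ℕ → β)}
    (hF : FiniteStateStronglyCausal F) : StronglyCausal F := by
  obtain ⟨Q, _, δ, q₀, out, hF⟩ := hF
  intro x y t hxy
  rw [hF x, hF y, List.map_congr_left fun i hi ↦ hxy i (List.mem_range.1 hi)]

namespace ParityGame

open Automaton

variable {α β Q : Type} (δ : Q → α × β → Q) (q₀ : Q) (col : Q → ℕ)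

/-- At `inl q` player `false` picks the next letter `x : α`; at `inr (q, x)` player `true` answers
with `y : β` and the automaton moves to `δ q (x, y)`. -/
def ofAutomaton : ParityGame (Q ⊕ Q × α) where
  owner := Sum.isRight
  Move v w := match v, w with
    | .inl q, .inr z => z.1 = q
    | .inr z, .inl q' => ∃ y, q' = δ z.1 (z.2, y)
    | _, _ => False
  color := Sum.elim col (col ∘ Prod.fst)

variable {δ col}

lemma ofAutomaton_move_inl {q : Q} {v : Q ⊕ Q × α} (h : (ofAutomaton δ col).Move (.inl q) v) :
    ∃ x, v = .inr (q, x) := by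
  rcases v with _ | ⟨q', x⟩
  · exact h.elim
  · exact ⟨x, by rw [show q' = q from h]⟩

lemma ofAutomaton_move_inr {z : Q × α} {v : Q ⊕ Q × α} (h : (ofAutomaton δ col).Move (.inr z) v) :
    ∃ y, v = .inl (δ z.1 (z.2, y)) := by
  rcases v with q' | _
  · obtain ⟨y, rfl⟩ := h
    exact ⟨y, rfl⟩
  · exact h.elim

variable (δ col)

lemma isSubarena_univ_ofAutomaton [Nonempty α] [Nonempty β] :
    (ofAutomaton δ col).IsSubarena univ
  | .inl q, _ => ⟨.inr (q, Classical.arbitrary α), mem_univ _, rfl⟩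
  | .inr z, _ => ⟨.inl (δ z.1 (z.2, Classical.arbitrary β)), mem_univ _, _, rfl⟩

/-- The play of `ofAutomaton δ col` in which the players spell out the ω-word `a`. -/
def wordPlay (a : ℕ → α × β) (n : ℕ) : Q ⊕ Q × α :=
  if n % 2 = 0 then .inl (run δ q₀ a (n / 2)) else .inr (run δ q₀ a (n / 2), (a (n / 2)).1)

variable {δ col}

@[simp]
lemma wordPlay_two_mul (a : ℕ → α × β) (m : ℕ) : wordPlay δ q₀ a (2 * m) = .inl (run δ q₀ a m) := by
  simp [wordPlay]

@[simp]
lemma wordPlay_two_mul_add_one (a : ℕ → α × β) (m : ℕ) :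
    wordPlay δ q₀ a (2 * m + 1) = .inr (run δ q₀ a m, (a m).1) := by
  simp [wordPlay, Nat.add_mod, Nat.add_div]

lemma wordPlay_succ_two_mul_add_one (a : ℕ → α × β) (m : ℕ) :
    wordPlay δ q₀ a (2 * m + 1 + 1) = .inl (δ (run δ q₀ a m) (a m)) := by
  rw [show 2 * m + 1 + 1 = 2 * (m + 1) by ring, wordPlay_two_mul, run_succ]

lemma isPlay_wordPlay (a : ℕ → α × β) : (ofAutomaton δ col).IsPlay univ (wordPlay δ q₀ a) := by
  refine ⟨fun _ ↦ mem_univ _, fun n ↦ ?_⟩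
  obtain ⟨m, rfl | rfl⟩ := Nat.even_or_odd' n
  · rw [wordPlay_two_mul_add_one, wordPlay_two_mul]
    rfl
  · rw [wordPlay_succ_two_mul_add_one, wordPlay_two_mul_add_one]
    exact ⟨(a m).2, rfl⟩

lemma winner_wordPlay [Finite Q] (a : ℕ → α × β) :
    (ofAutomaton δ col).winner (wordPlay δ q₀ a) = true ↔ ParityAccepts δ q₀ col a := by
  have hcol : (ofAutomaton δ col).color ∘ wordPlay δ q₀ a = (col ∘ run δ q₀ a) ∘ (· / 2) := by
    ext n
    simp only [Function.comp_apply, wordPlay]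
    split_ifs <;> rfl
  rw [winner, hcol, infinitelyOften_comp (map_div_atTop_eq_nat 2 two_pos), parityAccepts_iff,
    decide_eq_true_iff]

variable [Fintype Q]

theorem exists_finiteStateCausal_of_isWinningRegion [Nonempty β] {W : Set (Q ⊕ Q × α)}
    {τ : Q ⊕ Q × α → Q ⊕ Q × α} (hW : (ofAutomaton δ col).IsWinningRegion univ true W τ)
    (h₀ : .inl q₀ ∈ W) :
    ∃ F : (ℕ → α) → (ℕ → β), FiniteStateCausal F ∧
      ∀ X, ParityAccepts δ q₀ col fun n ↦ (X n, F X n) := by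
  let out : Q → α → β := fun q x ↦ Classical.epsilon fun y ↦ τ (.inr (q, x)) = .inl (δ q (x, y))
  have hout : ∀ q x, .inr (q, x) ∈ W → τ (.inr (q, x)) = .inl (δ q (x, out q x)) := fun _ _ hv ↦
    Classical.epsilon_spec (ofAutomaton_move_inr (hW.strategy_mem _ hv rfl).2)
  let δ' : Q → α → Q := fun q x ↦ δ q (x, out q x)
  refine ⟨fun X n ↦ out (run δ' q₀ X n) (X n), ⟨Q, inferInstance, δ', q₀, out, fun _ _ ↦ rfl⟩,
    fun X ↦ ?_⟩
  have hrun : ∀ n, run δ' q₀ X n = run δ q₀ (fun i ↦ (X i, out (run δ' q₀ X i) (X i))) n :=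
    run_feedback δ q₀ (fun q x ↦ (x, out q x)) X
  rw [← winner_wordPlay]
  refine hW.winner_eq_of_mem (isPlay_wordPlay _ _) (fun n hn ho ↦ ?_) (k := 0) h₀
  obtain ⟨m, rfl | rfl⟩ := Nat.even_or_odd' n
  · simp [ofAutomaton] at ho
  · rw [wordPlay_two_mul_add_one] at hn ⊢
    rw [wordPlay_succ_two_mul_add_one, hout _ _ hn]
    beta_reduce
    rw [← hrun m]

theorem exists_finiteStateStronglyCausal_of_isWinningRegion [Nonempty α] {W : Set (Q ⊕ Q × α)}
    {τ : Q ⊕ Q × α → Q ⊕ Q × α} (hW : (ofAutomaton δ col).IsWinningRegion univ false W τ)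
    (h₀ : .inl q₀ ∈ W) :
    ∃ G : (ℕ → β) → (ℕ → α), FiniteStateStronglyCausal G ∧
      ∀ Y, ¬ParityAccepts δ q₀ col fun n ↦ (G Y n, Y n) := by
  let out : Q → α := fun q ↦ Classical.epsilon fun x ↦ τ (.inl q) = .inr (q, x)
  have hout : ∀ q, .inl q ∈ W → τ (.inl q) = .inr (q, out q) := fun _ hv ↦
    Classical.epsilon_spec (ofAutomaton_move_inl (hW.strategy_mem _ hv rfl).2)
  let δ' : Q → β → Q := fun q y ↦ δ q (out q, y)
  refine ⟨fun Y n ↦ out (run δ' q₀ Y n), ⟨Q, inferInstance, δ', q₀, out, fun _ _ ↦ rfl⟩,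
    fun Y hacc ↦ ?_⟩
  have hrun : ∀ n, run δ' q₀ Y n = run δ q₀ (fun i ↦ (out (run δ' q₀ Y i), Y i)) n :=
    run_feedback δ q₀ (fun q y ↦ (out q, y)) Y
  rw [← winner_wordPlay] at hacc
  refine Bool.false_ne_true (hacc ▸ hW.winner_eq_of_mem (isPlay_wordPlay _ _)
    (fun n hn ho ↦ ?_) (k := 0) h₀).symm
  obtain ⟨m, rfl | rfl⟩ := Nat.even_or_odd' n
  · rw [wordPlay_two_mul] at hn ⊢
    rw [wordPlay_two_mul_add_one, hout _ hn]
    beta_reduce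
    rw [← hrun m]
  · simp [ofAutomaton] at ho

end ParityGame

theorem buchi_landweber_general {α β : Type} [Fintype α]
    [Nonempty α] [Nonempty β]
    {Q : Type} [Fintype Q] (δ : Q → α × β → Q) (q₀ : Q) (col : Q → ℕ)
    (W : Set ((ℕ → α) × (ℕ → β)))
    (hW : ∀ (x : ℕ → α) (y : ℕ → β),
      (x, y) ∈ W ↔ ParityAccepts δ q₀ col (fun n => (x n, y n))) :
    (∃ F : (ℕ → α) → (ℕ → β), FiniteStateCausal F ∧ Causal F ∧
      ∀ X, (X, F X) ∈ W) ∨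
    (∃ G : (ℕ → β) → (ℕ → α), FiniteStateStronglyCausal G ∧ StronglyCausal G ∧
      ∀ Y, (G Y, Y) ∉ W) := by
  obtain ⟨W₁, σ₁, W₂, σ₂, hcover, h₁, h₂⟩ :=
    (ParityGame.ofAutomaton δ col).determined univ
      (ParityGame.isSubarena_univ_ofAutomaton δ col) true
  rcases (hcover.symm ▸ mem_univ (Sum.inl q₀) : Sum.inl q₀ ∈ W₁ ∪ W₂) with h₀ | h₀
  · obtain ⟨F, hF, hacc⟩ := ParityGame.exists_finiteStateCausal_of_isWinningRegion q₀ h₁ h₀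
    exact .inl ⟨F, hF, hF.causal, fun X ↦ (hW X (F X)).2 (hacc X)⟩
  · obtain ⟨G, hG, hrej⟩ := ParityGame.exists_finiteStateStronglyCausal_of_isWinningRegion q₀ h₂ h₀
    exact .inr ⟨G, hG, hG.stronglyCausal, fun Y hY ↦ hrej Y ((hW (G Y) Y).1 hY)⟩

/-- The Büchi–Landweber theorem in automaton form: for a finite deterministic
parity automaton `A` over `α × β` defining `W ⊆ (ℕ → α) × (ℕ → β)`, either
Player II has a finite-state winning strategy (a finite-state causal `F` with
`(X, F X) ∈ W` for all `X`) or Player I has one (a finite-state strongly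
causal `G` with `(G Y, Y) ∉ W` for all `Y`). -/
theorem buchi_landweber {α β : Type} [Fintype α] [Fintype β]
    [Nonempty α] [Nonempty β]
    {Q : Type} [Fintype Q] (δ : Q → α × β → Q) (q₀ : Q) (col : Q → ℕ)
    (W : Set ((ℕ → α) × (ℕ → β)))
    (hW : ∀ (x : ℕ → α) (y : ℕ → β),
      (x, y) ∈ W ↔ ParityAccepts δ q₀ col (fun n => (x n, y n))) :
    (∃ F : (ℕ → α) → (ℕ → β), FiniteStateCausal F ∧ Causal F ∧
      ∀ X, (X, F X) ∈ W) ∨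
    (∃ G : (ℕ → β) → (ℕ → α), FiniteStateStronglyCausal G ∧ StronglyCausal G ∧
      ∀ Y, (G Y, Y) ∉ W) :=
  buchi_landweber_general δ q₀ col W hW
end

section
/- For every finite deterministic parity automaton A over the alphabet {0,1} × {0,1} × {0,1} defining the relation R_A on triples of ω-sequences, and for every P ⊆ ℕ, either there is a causal operator F : (ℕ → Bool) → (ℕ → Bool) such that (X, F X, χ_P) ∈ R_A for every X, or there is a strongly causal operator G : (ℕ → Bool) → (ℕ → Bool) such that (G Y, Y, χ_P) ∉ R_A for every Y. -/
open Filter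

theorem frequently_atTop_add_iff {P : ℕ → Prop} (k : ℕ) :
    (∃ᶠ n in atTop, P (k + n)) ↔ ∃ᶠ n in atTop, P n := by
  simp_rw [Nat.add_comm k, ← frequently_map (m := (· + k)), map_add_atTop_eq_nat]

theorem frequently_comp_eq_iff_exists {Q : Type*} [Finite Q] (f : ℕ → Q) (col : Q → ℕ) (k : ℕ) :
    (∃ᶠ n in atTop, col (f n) = k) ↔ ∃ q, (∃ᶠ n in atTop, f n = q) ∧ col q = k := by
  calc (∃ᶠ n in atTop, col (f n) = k)
      ↔ ∃ᶠ n in atTop, ∃ q, f n = q ∧ col q = k := by simp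
    _ ↔ ∃ q, ∃ᶠ n in atTop, f n = q ∧ col q = k := frequently_exists
    _ ↔ _ := by simp only [frequently_and_distrib_right]

theorem exists_run_start {P : ℕ → Prop} {n : ℕ} (h : ¬P n) :
    ∃ m ≤ n, (m = 0 ∨ P (m - 1)) ∧ ∀ j, m ≤ j → j ≤ n → ¬P j := by
  induction n with
  | zero => exact ⟨0, le_rfl, Or.inl rfl, fun j _ hj => by rwa [Nat.le_zero.mp hj]⟩
  | succ n ih =>
    by_cases hn : P n
    · exact ⟨n + 1, le_rfl, Or.inr hn, fun j h₁ h₂ => by rwa [le_antisymm h₂ h₁]⟩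
    obtain ⟨m, hmn, hm, hrun⟩ := ih hn
    refine ⟨m, by omega, hm, fun j h₁ h₂ => ?_⟩
    rcases Nat.lt_or_ge j (n + 1) with hj | hj
    · exact hrun j h₁ (by omega)
    · rwa [le_antisymm h₂ hj]

noncomputable def minInfOften (s : ℕ → ℕ) : ℕ :=
  sInf {k | ∃ᶠ n in atTop, s n = k}

def ParityWin (b : Bool) (s : ℕ → ℕ) : Prop :=
  Even (minInfOften s) ↔ b = true

theorem minInfOften_shift (s : ℕ → ℕ) (k : ℕ) :
    minInfOften (fun n => s (k + n)) = minInfOften s := by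
  unfold minInfOften
  congr 1
  ext j
  exact frequently_atTop_add_iff (P := fun n => s n = j) k

theorem minInfOften_comp_div_two (s : ℕ → ℕ) :
    minInfOften (fun m => s (m / 2)) = minInfOften s := by
  unfold minInfOften
  congr 1
  ext k
  show (∃ᶠ m in atTop, s (m / 2) = k) ↔ ∃ᶠ n in atTop, s n = k
  rw [← frequently_map (m := (· / 2)) (P := fun n => s n = k), map_div_atTop_eq_nat 2 two_pos]

theorem minInfOften_eq {s : ℕ → ℕ} {p : ℕ} (hp : ∃ᶠ n in atTop, s n = p)
    (hle : ∀ n, p ≤ s n) : minInfOften s = p := by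
  refine le_antisymm (Nat.sInf_le hp) ?_
  obtain ⟨n, hn⟩ := (Nat.sInf_mem (s := {k | ∃ᶠ n in atTop, s n = k}) ⟨p, hp⟩).exists
  exact (hle n).trans_eq hn

structure Arena (V : Type*) where
  owner : V → Bool
  move : V → Bool → V

/-- A strategy sees the vertices visited so far, the current one last. -/
abbrev Strategy (V : Type*) := List V → Bool

namespace Strategy

variable {V : Type*}

def positional (f : V → Bool) : Strategy V :=
  fun h => (h.getLast?.map f).getD false

open Classical in
/-- Play `σ` until the first visit to `T`, then `τ` on the history from that visit on. -/
noncomputable def switchAt (T : Set V) (σ τ : Strategy V) : Strategy V := fun h =>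
  if h.dropWhile (· ∉ T) = [] then σ h else τ (h.dropWhile (· ∉ T))

open Classical in
/-- Play `σ` inside `A`, and outside `A` play `τ` on the history since the last exit from `A`. -/
noncomputable def restartOutside (A : Set V) (σ τ : Strategy V) : Strategy V := fun h =>
  if h.rtakeWhile (· ∉ A) = [] then σ h else τ (h.rtakeWhile (· ∉ A))

end Strategy

namespace Arena

variable {V : Type*} (G : Arena V) (prio : V → ℕ)

def play (v : V) (c : ℕ → Bool) : ℕ → V
  | 0 => v
  | n + 1 => G.move (play v c n) (c n)

def history (v : V) (c : ℕ → Bool) (n : ℕ) : List V :=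
  (List.range (n + 1)).map (G.play v c)

def ConformsUpTo (b : Bool) (σ : Strategy V) (v : V) (c : ℕ → Bool) (N : ℕ) : Prop :=
  ∀ n < N, G.owner (G.play v c n) = b → c n = σ (G.history v c n)

def Conforms (b : Bool) (σ : Strategy V) (v : V) (c : ℕ → Bool) : Prop :=
  ∀ n, G.owner (G.play v c n) = b → c n = σ (G.history v c n)

/-- In the subgame on `U`, the opponent loses by leaving `U`. -/
def WinsWith (b : Bool) (U : Set V) (σ : Strategy V) (v : V) : Prop :=
  (∀ c n, G.ConformsUpTo b σ v c (n + 1) → (∀ k ≤ n, G.play v c k ∈ U) →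
      G.owner (G.play v c n) = b → G.play v c (n + 1) ∈ U) ∧
    ∀ c, G.Conforms b σ v c → (∀ n, G.play v c n ∈ U) →
      ParityWin b (fun n => prio (G.play v c n))

def Wins (b : Bool) (U : Set V) (v : V) : Prop :=
  v ∈ U ∧ ∃ σ, G.WinsWith prio b U σ v

def IsSubarena (U : Set V) : Prop :=
  ∀ v ∈ U, ∃ m, G.move v m ∈ U

def IsTrap (b : Bool) (U W : Set V) : Prop :=
  ∀ w ∈ W, G.owner w = b → ∀ m, G.move w m ∈ U → G.move w m ∈ W

def attrStage (b : Bool) (U T : Set V) : ℕ → Set V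
  | 0 => U ∩ T
  | n + 1 => attrStage b U T n ∪ {v ∈ U | if G.owner v = b
      then ∃ m, G.move v m ∈ attrStage b U T n
      else ∀ m, G.move v m ∈ U → G.move v m ∈ attrStage b U T n}

def attr (b : Bool) (U T : Set V) : Set V :=
  ⋃ n, G.attrStage b U T n

open Classical in
/-- Move to the earliest reachable attractor stage, if any, otherwise stay in `U`. -/
noncomputable def attrMove (b : Bool) (U T : Set V) (v : V) : Bool :=
  if ∃ n m, G.move v m ∈ G.attrStage b U T n then
    decide (∃ n, G.move v true ∈ G.attrStage b U T n ∧ G.move v false ∉ G.attrStage b U T n)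
  else decide (G.move v true ∈ U)

/-- The play from `v` in which `b` follows `σ` and the opponent plays `z n` at time `n`; the
truncation of the earlier bits makes the recursion well founded (see `outcome_eq`). -/
noncomputable def outcome (b : Bool) (σ : Strategy V) (v : V) (z : ℕ → Bool) (n : ℕ) :
    Bool :=
  if G.owner (G.play v (fun i => if _ : i < n then outcome b σ v z i else false) n) = b then
    σ (G.history v (fun i => if _ : i < n then outcome b σ v z i else false) n)
  else z n
termination_by n

variable {G prio} {b : Bool} {U T : Set V} {v : V} {c : ℕ → Bool} {σ τ : Strategy V}

section Plays

theorem play_add (v : V) (c : ℕ → Bool) (k n : ℕ) :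
    G.play v c (k + n) = G.play (G.play v c k) (fun t => c (k + t)) n := by
  induction n with
  | zero => rfl
  | succ n ih => rw [← Nat.add_assoc, play, ih, play]

theorem play_congr {d : ℕ → Bool} {n : ℕ} (h : ∀ i < n, c i = d i) :
    G.play v c n = G.play v d n := by
  induction n with
  | zero => rfl
  | succ n ih => simp only [play, ih fun i hi => h i (by omega), h n n.lt_succ_self]

theorem history_congr {d : ℕ → Bool} {n : ℕ} (h : ∀ i < n, c i = d i) :
    G.history v c n = G.history v d n := by
  refine List.map_congr_left fun k hk => play_congr fun i hi => h i ?_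
  rw [List.mem_range] at hk
  omega

theorem history_add (v : V) (c : ℕ → Bool) (k n : ℕ) :
    G.history v c (k + n) = (List.range k).map (G.play v c) ++
      G.history (G.play v c k) (fun t => c (k + t)) n := by
  rw [history, history, Nat.add_assoc, List.range_add, List.map_append, List.map_map]
  congr 1
  exact List.map_congr_left fun t _ => play_add v c k t

theorem history_eq_cons (v : V) (c : ℕ → Bool) (n : ℕ) : ∃ t, G.history v c n = v :: t :=
  ⟨_, by rw [history, List.range_succ_eq_map, List.map_cons]; rfl⟩

theorem getLast?_history (v : V) (c : ℕ → Bool) (n : ℕ) :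
    (G.history v c n).getLast? = some (G.play v c n) := by
  simp [history, List.getLast?_range]

theorem positional_history (f : V → Bool) (n : ℕ) :
    Strategy.positional f (G.history v c n) = f (G.play v c n) := by
  simp [Strategy.positional, getLast?_history]

theorem switchAt_history_of_forall_not_mem {n : ℕ} (h : ∀ k ≤ n, G.play v c k ∉ T) :
    Strategy.switchAt T σ τ (G.history v c n) = σ (G.history v c n) := by
  classical
  rw [Strategy.switchAt, if_pos (List.dropWhile_eq_nil_iff.2 fun w hw => ?_)]
  obtain ⟨k, hk, rfl⟩ := List.mem_map.mp hw
  simpa using h k (by rw [List.mem_range] at hk; omega)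

theorem switchAt_history_add {k : ℕ} (hk : G.play v c k ∈ T) (h : ∀ j < k, G.play v c j ∉ T)
    (n : ℕ) :
    Strategy.switchAt T σ τ (G.history v c (k + n)) =
      τ (G.history (G.play v c k) (fun t => c (k + t)) n) := by
  classical
  obtain ⟨t, ht⟩ := G.history_eq_cons (G.play v c k) (fun t => c (k + t)) n
  have hdrop : (G.history v c (k + n)).dropWhile (· ∉ T) =
      G.history (G.play v c k) (fun t => c (k + t)) n := by
    rw [history_add, List.dropWhile_append_of_pos, ht,
      List.dropWhile_cons_of_neg (by simpa using hk)]
    simp only [List.mem_map, List.mem_range]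
    rintro _ ⟨j, hj, rfl⟩
    simpa using h j hj
  rw [Strategy.switchAt, hdrop, if_neg (by simp [ht])]

theorem restartOutside_history_of_mem {A : Set V} {n : ℕ} (h : G.play v c n ∈ A) :
    Strategy.restartOutside A σ τ (G.history v c n) = σ (G.history v c n) := by
  classical
  rw [Strategy.restartOutside, if_pos (List.rtakeWhile_eq_nil_iff.2 fun hne => ?_)]
  have hlast := getLast?_history (G := G) v c n
  rw [List.getLast?_eq_some_getLast hne, Option.some.injEq] at hlast
  simpa [hlast] using h

theorem restartOutside_history_add {A : Set V} {m n : ℕ} (hm : m = 0 ∨ G.play v c (m - 1) ∈ A)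
    (h : ∀ t ≤ n, G.play v c (m + t) ∉ A) :
    Strategy.restartOutside A σ τ (G.history v c (m + n)) =
      τ (G.history (G.play v c m) (fun t => c (m + t)) n) := by
  classical
  obtain ⟨t, ht⟩ := G.history_eq_cons (G.play v c m) (fun t => c (m + t)) n
  have hpre : ((List.range m).map (G.play v c)).rtakeWhile (· ∉ A) = [] := by
    refine List.rtakeWhile_eq_nil_iff.2 fun hne => ?_
    rcases hm with rfl | hm
    · simp at hne
    · simpa [List.getLast_map, List.getLast_range] using hm
  have hrun : ∀ w ∈ G.history (G.play v c m) (fun t => c (m + t)) n, w ∉ A := by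
    simp only [history, List.mem_map, List.mem_range]
    rintro _ ⟨j, hj, rfl⟩
    simpa [← play_add] using h j (by omega)
  have htake : (G.history v c (m + n)).rtakeWhile (· ∉ A) =
      G.history (G.play v c m) (fun t => c (m + t)) n := by
    rw [history_add, List.rtakeWhile, List.reverse_append,
      List.takeWhile_append_of_pos (by simpa using hrun), List.reverse_append,
      List.reverse_reverse, ← List.rtakeWhile, hpre, List.nil_append]
  rw [Strategy.restartOutside, htake, if_neg (by simp [ht])]

end Plays

section Winning

theorem winsWith_congr (h : ∀ c n, σ (G.history v c n) = τ (G.history v c n)) :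
    G.WinsWith prio b U σ v ↔ G.WinsWith prio b U τ v := by
  simp only [WinsWith, ConformsUpTo, Conforms, h]

theorem exists_winsWith_of_forall_wins (h : ∀ w ∈ T, G.Wins prio b U w) :
    ∃ τ, ∀ w ∈ T, G.WinsWith prio b U τ w := by
  have : ∀ w, ∃ σ, w ∈ T → G.WinsWith prio b U σ w := fun w => by
    by_cases hw : w ∈ T
    · obtain ⟨σ, hσ⟩ := (h w hw).2
      exact ⟨σ, fun _ => hσ⟩
    · exact ⟨fun _ => false, fun h => absurd h hw⟩
  choose σ hσ using this
  -- a history begins with the vertex the play started from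
  refine ⟨fun l => match l with | [] => false | w :: t => σ w (w :: t), fun w hw => ?_⟩
  refine (winsWith_congr fun c n => ?_).mp (hσ w hw)
  obtain ⟨t, ht⟩ := G.history_eq_cons w c n
  rw [ht]

theorem WinsWith.mem_of_tail {k n : ℕ} (hτ : G.WinsWith prio b U τ (G.play v c k))
    (hc : ∀ t ≤ n, G.owner (G.play v c (k + t)) = b →
      c (k + t) = τ (G.history (G.play v c k) (fun t => c (k + t)) t))
    (hU : ∀ t ≤ n, G.play v c (k + t) ∈ U) (hn : G.owner (G.play v c (k + n)) = b) :
    G.play v c (k + n + 1) ∈ U := by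
  simp only [play_add v c k] at hc hU hn
  rw [Nat.add_assoc, play_add]
  exact hτ.1 _ n (fun t ht => hc t (by omega)) hU hn

theorem WinsWith.parityWin_of_tail {k : ℕ} (hτ : G.WinsWith prio b U τ (G.play v c k))
    (hc : ∀ t, G.owner (G.play v c (k + t)) = b →
      c (k + t) = τ (G.history (G.play v c k) (fun t => c (k + t)) t))
    (hU : ∀ t, G.play v c (k + t) ∈ U) :
    ParityWin b (fun n => prio (G.play v c n)) := by
  simp only [play_add v c k] at hc hU
  have := hτ.2 _ hc hU
  simp only [ParityWin, ← play_add] at this ⊢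
  rwa [minInfOften_shift (fun n => prio (G.play v c n)) k] at this

theorem WinsWith.of_isTrap {W : Set V} (hWU : W ⊆ U) (htrap : G.IsTrap (!b) U W) (hv : v ∈ W)
    (h : G.WinsWith prio b W σ v) : G.WinsWith prio b U σ v := by
  have stay : ∀ c n, G.ConformsUpTo b σ v c n → (∀ k ≤ n, G.play v c k ∈ U) →
      ∀ k ≤ n, G.play v c k ∈ W := by
    intro c n
    induction n with
    | zero => intro _ _ k hk; rwa [Nat.le_zero.mp hk]
    | succ n ih =>
      intro hc hU k hk
      have hW := ih (fun j hj => hc j (by omega)) (fun j hj => hU j (by omega))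
      rcases Nat.lt_or_ge k (n + 1) with hkn | hkn
      · exact hW k (by omega)
      rw [le_antisymm hk hkn]
      by_cases hown : G.owner (G.play v c n) = b
      · exact h.1 c n hc hW hown
      · exact htrap _ (hW n le_rfl) (Bool.eq_not_of_ne hown) _ (hU (n + 1) le_rfl)
  refine ⟨fun c n hc hU hown => hWU (h.1 c n hc ?_ hown), fun c hc hU => h.2 c hc fun n => ?_⟩
  · exact stay c n (fun j hj => hc j (by omega)) hU
  · exact stay c n (fun j _ => hc j) (fun k _ => hU k) n le_rfl

theorem winsWith_switchAt (hτ : ∀ w ∈ T, G.WinsWith prio b U τ w)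
    (hsafe : ∀ c n, G.ConformsUpTo b σ v c (n + 1) → (∀ k ≤ n, G.play v c k ∈ U) →
      (∀ k ≤ n, G.play v c k ∉ T) → G.owner (G.play v c n) = b → G.play v c (n + 1) ∈ U)
    (hwin : ∀ c, G.Conforms b σ v c → (∀ n, G.play v c n ∈ U) →
      (∀ n, G.play v c n ∉ T) → ParityWin b (fun n => prio (G.play v c n))) :
    G.WinsWith prio b U (Strategy.switchAt T σ τ) v := by
  classical
  constructor
  · intro c n hc hU hown
    by_cases hT : ∃ k, k ≤ n ∧ G.play v c k ∈ T
    · obtain ⟨k, ⟨hkn, hk⟩, hmin⟩ :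
          ∃ k, (k ≤ n ∧ G.play v c k ∈ T) ∧ ∀ j < k, G.play v c j ∉ T :=
        ⟨_, Nat.find_spec hT, fun j hj hjT =>
          Nat.find_min hT hj ⟨(hj.trans_le (Nat.find_spec hT).1).le, hjT⟩⟩
      obtain ⟨t, rfl⟩ : ∃ t, n = k + t := ⟨n - k, by omega⟩
      refine (hτ _ hk).mem_of_tail (fun s hs hs' => ?_) (fun s hs => hU _ (by omega)) hown
      rw [hc _ (by omega) hs', switchAt_history_add hk hmin]
    · push Not at hT
      refine hsafe c n (fun j hj hj' => ?_) hU hT hown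
      rw [hc j hj hj', switchAt_history_of_forall_not_mem fun k hk => hT k (by omega)]
  · intro c hc hU
    by_cases hT : ∃ k, G.play v c k ∈ T
    · refine (hτ _ (Nat.find_spec hT)).parityWin_of_tail (fun t ht => ?_) fun t => hU _
      rw [hc _ ht, switchAt_history_add (Nat.find_spec hT) fun j hj => Nat.find_min hT hj]
    · push Not at hT
      refine hwin c (fun j hj => ?_) hU hT
      rw [hc j hj, switchAt_history_of_forall_not_mem fun k _ => hT k]

end Winning

section Attractor

theorem attrStage_mono : Monotone (G.attrStage b U T) :=
  monotone_nat_of_le_succ fun _ => Set.subset_union_left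

theorem attrStage_subset (n : ℕ) : G.attrStage b U T n ⊆ U := by
  induction n with
  | zero => exact Set.inter_subset_left
  | succ n ih => exact Set.union_subset ih (Set.sep_subset _ _)

theorem attr_subset : G.attr b U T ⊆ U :=
  Set.iUnion_subset attrStage_subset

theorem inter_subset_attr : U ∩ T ⊆ G.attr b U T :=
  Set.subset_iUnion (G.attrStage b U T) 0

theorem isTrap_diff_attr : G.IsTrap b U (U \ G.attr b U T) := by
  rintro w ⟨hwU, hwA⟩ hown m hm
  refine ⟨hm, fun hmA => ?_⟩
  obtain ⟨n, hn⟩ := Set.mem_iUnion.1 hmA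
  refine hwA (Set.mem_iUnion.2 ⟨n + 1, Or.inr ⟨hwU, ?_⟩⟩)
  rw [if_pos hown]
  exact ⟨m, hn⟩

theorem isSubarena_diff_attr (hU : G.IsSubarena U) : G.IsSubarena (U \ G.attr b U T) := by
  rintro w ⟨hwU, hwA⟩
  by_cases hown : G.owner w = b
  · obtain ⟨m, hm⟩ := hU w hwU
    exact ⟨m, isTrap_diff_attr w ⟨hwU, hwA⟩ hown m hm⟩
  by_contra! hall
  simp only [Set.mem_sdiff, not_and, not_not] at hall
  -- both moves enter the attractor, hence a common stage
  have hev : ∀ᶠ n in atTop, ∀ m, G.move w m ∈ U → G.move w m ∈ G.attrStage b U T n := by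
    refine Filter.eventually_all.2 fun m => ?_
    by_cases hm : G.move w m ∈ U
    · obtain ⟨n₀, hn₀⟩ := Set.mem_iUnion.1 (hall m hm)
      exact Filter.eventually_atTop.2 ⟨n₀, fun n hn _ => attrStage_mono hn hn₀⟩
    · exact Filter.Eventually.of_forall fun _ h => absurd h hm
  obtain ⟨n, hn⟩ := hev.exists
  refine hwA (Set.mem_iUnion.2 ⟨n + 1, Or.inr ⟨hwU, ?_⟩⟩)
  rw [if_neg hown]
  exact hn

theorem move_attrMove_mem_attrStage {m : Bool} {n : ℕ}
    (h : G.move v m ∈ G.attrStage b U T n) :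
    G.move v (G.attrMove b U T v) ∈ G.attrStage b U T n := by
  classical
  rw [attrMove, if_pos ⟨n, m, h⟩]
  by_cases hd : ∃ n', G.move v true ∈ G.attrStage b U T n' ∧
      G.move v false ∉ G.attrStage b U T n'
  · rw [decide_eq_true hd]
    obtain ⟨n', htrue, hfalse⟩ := hd
    rcases le_total n' n with hle | hle
    · exact attrStage_mono hle htrue
    · cases m
      · exact absurd (attrStage_mono hle h) hfalse
      · exact h
  · rw [decide_eq_false hd]
    push Not at hd
    cases m
    · exact h
    · exact hd n h

theorem move_attrMove_mem (hU : G.IsSubarena U) (hv : v ∈ U) :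
    G.move v (G.attrMove b U T v) ∈ U := by
  classical
  by_cases h : ∃ n m, G.move v m ∈ G.attrStage b U T n
  · obtain ⟨n, m, hm⟩ := h
    exact attrStage_subset n (move_attrMove_mem_attrStage hm)
  rw [attrMove, if_neg h]
  by_cases htrue : G.move v true ∈ U
  · rwa [decide_eq_true htrue]
  obtain ⟨m, hm⟩ := hU v hv
  cases m
  · rwa [decide_eq_false htrue]
  · exact absurd hm htrue

theorem exists_play_mem_of_mem_attrStage {n : ℕ} (hv : v ∈ G.attrStage b U T n)
    (hU : ∀ k, G.play v c k ∈ U)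
    (hc : ∀ k, G.owner (G.play v c k) = b → G.play v c k ∈ G.attr b U T →
      c k = G.attrMove b U T (G.play v c k)) :
    ∃ k, G.play v c k ∈ T := by
  induction n generalizing v c with
  | zero => exact ⟨0, hv.2⟩
  | succ n ih =>
    have hvA : v ∈ G.attr b U T := Set.mem_iUnion.2 ⟨n + 1, hv⟩
    rcases hv with hv | ⟨-, hv⟩
    · exact ih hv hU hc
    have hstep : G.play v c 1 ∈ G.attrStage b U T n := by
      split_ifs at hv with hown
      · obtain ⟨m, hm⟩ := hv
        show G.move v (c 0) ∈ _
        rw [hc 0 hown hvA]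
        exact move_attrMove_mem_attrStage hm
      · exact hv (c 0) (hU 1)
    obtain ⟨k, hk⟩ := ih hstep (c := fun t => c (1 + t))
      (fun k => by rw [← play_add]; exact hU _) fun k => by simp only [← play_add]; exact hc _
    exact ⟨1 + k, by rwa [play_add]⟩

theorem frequently_play_mem_of_frequently_mem_attr (hU : ∀ k, G.play v c k ∈ U)
    (hc : ∀ k, G.owner (G.play v c k) = b → G.play v c k ∈ G.attr b U T →
      c k = G.attrMove b U T (G.play v c k))
    (hinf : ∃ᶠ n in atTop, G.play v c n ∈ G.attr b U T) :
    ∃ᶠ n in atTop, G.play v c n ∈ T := by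
  rw [Filter.frequently_atTop] at hinf ⊢
  intro N
  obtain ⟨n, hn, hnA⟩ := hinf N
  obtain ⟨s, hs⟩ := Set.mem_iUnion.1 hnA
  obtain ⟨k, hk⟩ := exists_play_mem_of_mem_attrStage (c := fun t => c (n + t)) hs
    (fun k => by rw [← play_add]; exact hU _) fun k => by simp only [← play_add]; exact hc _
  exact ⟨n + k, by omega, by rwa [play_add]⟩

theorem wins_of_mem_attr (hU : G.IsSubarena U) (hT : ∀ w ∈ T, G.Wins prio b U w)
    (hv : v ∈ G.attr b U T) : G.Wins prio b U v := by
  obtain ⟨τ, hτ⟩ := exists_winsWith_of_forall_wins hT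
  refine ⟨attr_subset hv, Strategy.switchAt T (Strategy.positional (G.attrMove b U T)) τ,
    winsWith_switchAt hτ (fun c n hc hU' _ hown => ?_) fun c hc hU' hT' => ?_⟩
  · show G.move _ (c n) ∈ U
    rw [hc n n.lt_succ_self hown, positional_history]
    exact move_attrMove_mem hU (hU' n le_rfl)
  · obtain ⟨n, hn⟩ := Set.mem_iUnion.1 hv
    obtain ⟨k, hk⟩ := exists_play_mem_of_mem_attrStage hn hU' fun k hown _ => by
      rw [hc k hown, positional_history]
    exact absurd hk (hT' k)

theorem not_wins_diff_attr (hU : G.IsSubarena U) {w : V} :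
    ¬G.Wins prio b (U \ G.attr b U {u | G.Wins prio b U u}) w := by
  rintro ⟨hw, σ, hσ⟩
  obtain ⟨τ, hτ⟩ := exists_winsWith_of_forall_wins fun u =>
    wins_of_mem_attr (T := {u | G.Wins prio b U u}) hU fun _ hu => hu
  have hwin : G.Wins prio b U w := ⟨hw.1, _, winsWith_switchAt hτ
    (fun c n hc hU' hA hown => (hσ.1 c n hc (fun k hk => ⟨hU' k hk, hA k hk⟩) hown).1)
    fun c hc hU' hA => hσ.2 c hc fun n => ⟨hU' n, hA n⟩⟩
  exact hw.2 (inter_subset_attr ⟨hw.1, hwin⟩)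

end Attractor

section Determinacy

theorem wins_of_forall_wins_diff_attr {i : Bool} {p : ℕ} (hU : G.IsSubarena U)
    (hp : ∀ w ∈ U, p ≤ prio w) (hpi : Even p ↔ i = true)
    (hrest : ∀ w ∈ U \ G.attr i U {w | prio w = p},
      G.Wins prio i (U \ G.attr i U {w | prio w = p}) w) (hv : v ∈ U) :
    G.Wins prio i U v := by
  set A := G.attr i U {w | prio w = p}
  obtain ⟨τ, hτ⟩ := exists_winsWith_of_forall_wins hrest
  refine ⟨hv, Strategy.restartOutside A
    (Strategy.positional (G.attrMove i U {w | prio w = p})) τ,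
    fun c n hc hU' hown => ?_, fun c hc hU' => ?_⟩
  · by_cases hA : G.play v c n ∈ A
    · show G.move _ (c n) ∈ U
      rw [hc n n.lt_succ_self hown, restartOutside_history_of_mem hA, positional_history]
      exact move_attrMove_mem hU (hU' n le_rfl)
    obtain ⟨m, hmn, hm, hrun⟩ := exists_run_start (P := fun k => G.play v c k ∈ A) hA
    obtain ⟨t, rfl⟩ : ∃ t, n = m + t := ⟨n - m, by omega⟩
    refine ((hτ _ ⟨hU' m (by omega), hrun m le_rfl (by omega)⟩).mem_of_tail
      (fun s hs hown' => ?_) (fun s hs => ⟨hU' _ (by omega), hrun _ (by omega) (by omega)⟩)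
      hown).1
    rw [hc _ (by omega) hown',
      restartOutside_history_add hm fun s' _ => hrun _ (by omega) (by omega)]
  · by_cases hinf : ∃ᶠ n in atTop, G.play v c n ∈ A
    · have hfreq := frequently_play_mem_of_frequently_mem_attr hU' (fun k hown hkA => by
        rw [hc k hown, restartOutside_history_of_mem hkA, positional_history]) hinf
      rw [ParityWin, minInfOften_eq hfreq fun n => hp _ (hU' n)]
      exact hpi
    obtain ⟨N, hN⟩ := Filter.eventually_atTop.1 (Filter.not_frequently.1 hinf)
    obtain ⟨m, -, hm, hrun⟩ := exists_run_start (P := fun k => G.play v c k ∈ A) (hN N le_rfl)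
    have hrun' : ∀ j ≥ m, G.play v c j ∉ A := fun j hj =>
      (le_total j N).elim (hrun j hj) fun hNj => hN j hNj
    refine (hτ _ ⟨hU' m, hrun' m le_rfl⟩).parityWin_of_tail (fun t hown => ?_)
      fun t => ⟨hU' _, hrun' _ (by omega)⟩
    rw [hc _ hown, restartOutside_history_add hm fun s _ => hrun' _ (by omega)]

theorem exists_wins (hU : G.IsSubarena U) (hfin : (prio '' U).Finite) (hv : v ∈ U) :
    ∃ b, G.Wins prio b U v := by
  induction hn : (prio '' U).ncard using Nat.strong_induction_on generalizing U v with
  | _ n ih =>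
  set p := sInf (prio '' U)
  set i := decide (Even p)
  set U₁ := U \ G.attr (!i) U {u | G.Wins prio (!i) U u}
  by_cases hvA : v ∈ G.attr (!i) U {u | G.Wins prio (!i) U u}
  · exact ⟨!i, wins_of_mem_attr hU (fun u hu => hu) hvA⟩
  have hU₁ : G.IsSubarena U₁ := isSubarena_diff_attr hU
  set A := G.attr i U₁ {w | prio w = p}
  have hrest : ∀ w ∈ U₁ \ A, G.Wins prio i (U₁ \ A) w := by
    intro w hw
    have hsub : U₁ \ A ⊆ U := fun u hu => hu.1.1
    have hlt : (prio '' (U₁ \ A)).ncard < n := hn ▸ Set.ncard_lt_ncard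
      ((Set.ssubset_iff_of_subset (Set.image_mono hsub)).2 ⟨p, Nat.sInf_mem ⟨_, v, hv, rfl⟩,
        fun ⟨u, hu, hup⟩ => hu.2 (inter_subset_attr ⟨hu.1, hup⟩)⟩) hfin
    obtain ⟨b, hwR, σ, hσ⟩ :=
      ih _ hlt (isSubarena_diff_attr hU₁) (hfin.subset (Set.image_mono hsub)) hw rfl
    rcases Bool.eq_or_eq_not b i with rfl | rfl
    · exact ⟨hwR, σ, hσ⟩
    have htrap : G.IsTrap (!!i) U₁ (U₁ \ A) := by
      simpa using (isTrap_diff_attr : G.IsTrap i U₁ (U₁ \ A))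
    exact (not_wins_diff_attr (b := !i) hU
      ⟨hw.1, σ, hσ.of_isTrap (fun u hu => hu.1) htrap hwR⟩).elim
  obtain ⟨-, σ, hσ⟩ := wins_of_forall_wins_diff_attr hU₁
    (fun w hw => Nat.sInf_le (Set.mem_image_of_mem prio hw.1)) decide_eq_true_iff.symm hrest
    ⟨hv, hvA⟩
  exact ⟨i, hv, σ, hσ.of_isTrap Set.sdiff_subset isTrap_diff_attr ⟨hv, hvA⟩⟩

end Determinacy

section Outcome

theorem outcome_eq (b : Bool) (σ : Strategy V) (v : V) (z : ℕ → Bool) (n : ℕ) :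
    G.outcome b σ v z n = if G.owner (G.play v (G.outcome b σ v z) n) = b then
      σ (G.history v (G.outcome b σ v z) n) else z n := by
  have h : ∀ i < n, (if _ : i < n then G.outcome b σ v z i else false) = G.outcome b σ v z i :=
    fun i hi => dif_pos hi
  rw [outcome.eq_def, play_congr h, history_congr h]

theorem outcome_conforms (z : ℕ → Bool) : G.Conforms b σ v (G.outcome b σ v z) :=
  fun n hn => by rw [outcome_eq, if_pos hn]

theorem outcome_of_owner_ne {z : ℕ → Bool} {n : ℕ}
    (hn : G.owner (G.play v (G.outcome b σ v z) n) ≠ b) : G.outcome b σ v z n = z n := by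
  rw [outcome_eq, if_neg hn]

theorem outcome_congr {z z' : ℕ → Bool} {N : ℕ} (h : ∀ i < N, z i = z' i) :
    ∀ i < N, G.outcome b σ v z i = G.outcome b σ v z' i := by
  intro i
  induction i using Nat.strong_induction_on with
  | _ i ih =>
    intro hi
    have hlt : ∀ j < i, G.outcome b σ v z j = G.outcome b σ v z' j :=
      fun j hj => ih j hj (by omega)
    rw [outcome_eq, outcome_eq, play_congr hlt, history_congr hlt, h i hi]

theorem causal_outcome (G : Arena V) (b : Bool) (σ : Strategy V) (v : V) :
    Causal fun X n => G.outcome b σ v (fun m => X (m / 2)) (2 * n + 1) :=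
  fun _ _ t h _ _ => outcome_congr (N := 2 * t + 2) (fun i _ => h (i / 2) (by omega)) _ (by omega)

theorem stronglyCausal_outcome (hown : ∀ c n, G.owner (G.play v c (2 * n)) = b) :
    StronglyCausal fun Y n => G.outcome b σ v (fun m => Y (m / 2)) (2 * n) := by
  intro X Y t h
  have hlt := outcome_congr (G := G) (b := b) (σ := σ) (v := v) (N := 2 * t)
    fun i _ => h (i / 2) (by omega)
  dsimp only
  rw [outcome_eq, outcome_eq, if_pos (hown _ _), if_pos (hown _ _), history_congr hlt]

end Outcome

end Arena

section Automaton

variable {Q α : Type*}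

def run (δ : Q → α → Q) (q₀ : Q) (a : ℕ → α) (n : ℕ) : Q :=
  ((List.range n).map a).foldl δ q₀

theorem run_succ (δ : Q → α → Q) (q₀ : Q) (a : ℕ → α) (n : ℕ) :
    run δ q₀ a (n + 1) = δ (run δ q₀ a n) (a n) := by
  simp [run, List.range_succ]

theorem parityAccepts_iff [Finite Q] (δ : Q → α → Q) (q₀ : Q) (col : Q → ℕ)
    (a : ℕ → α) :
    ParityAccepts δ q₀ col a ↔ Even (minInfOften fun n => col (run δ q₀ a n)) := by
  rw [← minInfOften_shift _ 1, ParityAccepts, minInfOften]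
  congr! 2
  ext k
  show _ ↔ ∃ᶠ n in atTop, col (run δ q₀ a (1 + n)) = k
  rw [frequently_comp_eq_iff_exists]
  simp only [Nat.frequently_atTop_iff_infinite, Nat.add_comm 1]
  rfl

/-- From `(n, q, none)` player `false` picks `x`, then from `(n, q, some x)` player `true` picks
`y`, and the automaton reads `(x, y, z n)`. -/
def automatonArena (δ : Q → Bool × Bool × Bool → Q) (z : ℕ → Bool) :
    Arena (ℕ × Q × Option Bool) where
  owner v := v.2.2.isSome
  move
    | (n, q, none), x => (n, q, some x)
    | (n, q, some x), y => (n + 1, δ q (x, y, z n), none)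

variable (δ : Q → Bool × Bool × Bool → Q) (z : ℕ → Bool) (q₀ : Q)

theorem play_automatonArena (c : ℕ → Bool) (n : ℕ) :
    (automatonArena δ z).play (0, q₀, none) c (2 * n) =
        (n, run δ q₀ (fun k => (c (2 * k), c (2 * k + 1), z k)) n, none) ∧
      (automatonArena δ z).play (0, q₀, none) c (2 * n + 1) =
        (n, run δ q₀ (fun k => (c (2 * k), c (2 * k + 1), z k)) n, some (c (2 * n))) := by
  induction n with
  | zero => exact ⟨rfl, rfl⟩
  | succ n ih =>
    have h : (automatonArena δ z).play (0, q₀, none) c (2 * (n + 1)) =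
        (n + 1, run δ q₀ (fun k => (c (2 * k), c (2 * k + 1), z k)) (n + 1), none) := by
      rw [show 2 * (n + 1) = 2 * n + 1 + 1 by ring, Arena.play, ih.2, run_succ]
      rfl
    refine ⟨h, ?_⟩
    rw [Arena.play, h]
    rfl

theorem owner_play_automatonArena_two_mul (c : ℕ → Bool) (n : ℕ) :
    (automatonArena δ z).owner ((automatonArena δ z).play (0, q₀, none) c (2 * n)) = false := by
  rw [(play_automatonArena δ z q₀ c n).1]
  rfl

theorem owner_play_automatonArena_two_mul_add_one (c : ℕ → Bool) (n : ℕ) :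
    (automatonArena δ z).owner ((automatonArena δ z).play (0, q₀, none) c (2 * n + 1)) =
      true := by
  rw [(play_automatonArena δ z q₀ c n).2]
  rfl

theorem outcome_automatonArena_two_mul (σ : Strategy (ℕ × Q × Option Bool)) (X : ℕ → Bool)
    (n : ℕ) :
    (automatonArena δ z).outcome true σ (0, q₀, none) (fun m => X (m / 2)) (2 * n) = X n := by
  rw [Arena.outcome_of_owner_ne (by rw [owner_play_automatonArena_two_mul]; decide),
    Nat.mul_div_cancel_left n two_pos]

theorem outcome_automatonArena_two_mul_add_one (σ : Strategy (ℕ × Q × Option Bool))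
    (Y : ℕ → Bool) (n : ℕ) :
    (automatonArena δ z).outcome false σ (0, q₀, none) (fun m => Y (m / 2)) (2 * n + 1) =
      Y n := by
  rw [Arena.outcome_of_owner_ne (by rw [owner_play_automatonArena_two_mul_add_one]; decide),
    Nat.mul_add_div two_pos, Nat.div_eq_of_lt one_lt_two, Nat.add_zero]

variable [Finite Q] (col : Q → ℕ)

theorem parityAccepts_iff_play (c : ℕ → Bool) :
    ParityAccepts δ q₀ col (fun n => (c (2 * n), c (2 * n + 1), z n)) ↔
      Even (minInfOften fun m => col ((automatonArena δ z).play (0, q₀, none) c m).2.1) := by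
  rw [parityAccepts_iff, ← minInfOften_comp_div_two]
  congr! 3 with m
  obtain ⟨n, rfl | rfl⟩ := Nat.even_or_odd' m
  · rw [(play_automatonArena δ z q₀ c n).1, Nat.mul_div_cancel_left n two_pos]
  · rw [(play_automatonArena δ z q₀ c n).2, Nat.mul_add_div two_pos,
      Nat.div_eq_of_lt one_lt_two, Nat.add_zero]

theorem exists_causal_of_wins
    (h : (automatonArena δ z).Wins (fun v => col v.2.1) true Set.univ (0, q₀, none)) :
    ∃ F : (ℕ → Bool) → (ℕ → Bool), Causal F ∧
      ∀ X, ParityAccepts δ q₀ col (fun n => (X n, F X n, z n)) := by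
  obtain ⟨-, σ, hσ⟩ := h
  refine ⟨_, (automatonArena δ z).causal_outcome true σ (0, q₀, none), fun X => ?_⟩
  have hword := parityAccepts_iff_play δ z q₀ col
    ((automatonArena δ z).outcome true σ (0, q₀, none) fun m => X (m / 2))
  simp only [outcome_automatonArena_two_mul] at hword
  exact hword.2 ((hσ.2 _ (Arena.outcome_conforms _) fun _ => trivial).2 rfl)

theorem exists_stronglyCausal_of_wins
    (h : (automatonArena δ z).Wins (fun v => col v.2.1) false Set.univ (0, q₀, none)) :
    ∃ G : (ℕ → Bool) → (ℕ → Bool), StronglyCausal G ∧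
      ∀ Y, ¬ParityAccepts δ q₀ col (fun n => (G Y n, Y n, z n)) := by
  obtain ⟨-, σ, hσ⟩ := h
  refine ⟨_, Arena.stronglyCausal_outcome (σ := σ)
    (owner_play_automatonArena_two_mul δ z q₀), fun Y hY => ?_⟩
  have hword := parityAccepts_iff_play δ z q₀ col
    ((automatonArena δ z).outcome false σ (0, q₀, none) fun m => Y (m / 2))
  simp only [outcome_automatonArena_two_mul_add_one] at hword
  exact Bool.false_ne_true ((hσ.2 _ (Arena.outcome_conforms _) fun _ => trivial).1 (hword.1 hY))

end Automaton

/-- Determinacy of McNaughton games with a parameter `P`, in automaton form: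
for every finite deterministic parity automaton over `{0,1}³` defining the
relation `R_A` and every `P ⊆ ℕ`, either some causal operator `F` satisfies
`(X, F X, χ_P) ∈ R_A` for every `X`, or some strongly causal operator `G`
satisfies `(G Y, Y, χ_P) ∉ R_A` for every `Y`. -/
theorem mcnaughton_determinacy {Q : Type} [Fintype Q]
    (δ : Q → Bool × Bool × Bool → Q) (q₀ : Q) (col : Q → ℕ) (P : Set ℕ) :
    (∃ F : (ℕ → Bool) → (ℕ → Bool), Causal F ∧
      ∀ X : ℕ → Bool, ParityAccepts δ q₀ col (fun n => (X n, F X n, chi P n))) ∨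
    (∃ G : (ℕ → Bool) → (ℕ → Bool), StronglyCausal G ∧
      ∀ Y : ℕ → Bool, ¬ ParityAccepts δ q₀ col (fun n => (G Y n, Y n, chi P n))) := by
  have hfin : ((fun v : ℕ × Q × Option Bool => col v.2.1) '' Set.univ).Finite :=
    (Set.finite_range col).subset (Set.image_subset_iff.2 fun v _ => ⟨v.2.1, rfl⟩)
  obtain ⟨b, hb⟩ := (automatonArena δ (chi P)).exists_wins
    (fun _ _ => ⟨false, Set.mem_univ _⟩) hfin (Set.mem_univ (0, q₀, none))
  cases b
  · exact Or.inr (exists_stronglyCausal_of_wins δ (chi P) q₀ col hb)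
  · exact Or.inl (exists_causal_of_wins δ (chi P) q₀ col hb)
end
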